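/- arXiv:2007.15478 — 10 statements merged into one kernel-verified Lean document; each statement's English description precedes it below -/
import Mathlib

section
/- Let E be a quadratic word equation over a finite alphabet A of constants and a finite set V of variables. Then E has a solution if and only if the trivial equation ε = ε is reachable from E under the Nielsen transformation, i.e., E ⇒* (ε = ε). -/
namespace WordEq

variable {A V : Type*}

/-- A word over the alphabet of constants `A` and variables `V`. -/
abbrev Word (A V : Type*) := List (A ⊕ V)

/-- A word equation `L = R`, given as the pair `(L, R)`. -/
abbrev Equation (A V : Type*) := Word A V × Word A V

/-- Substitute the word `r` for every occurrence of the variable `x` in `w`. -/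
def substVar [DecidableEq V] (x : V) (r : Word A V) (w : Word A V) : Word A V :=
  w.flatMap fun s =>
    match s with
    | Sum.inl a => [Sum.inl a]
    | Sum.inr y => if y = x then r else [Sum.inr y]

/-- The number of occurrences of the variable `x` in the equation `E`
(counting both sides). -/
def varCount [DecidableEq A] [DecidableEq V] (E : Equation A V) (x : V) : ℕ :=
  (E.1 ++ E.2).count (Sum.inr x)

/-- An equation is quadratic if every variable occurs at most twice. -/
def Quadratic [DecidableEq A] [DecidableEq V] (E : Equation A V) : Prop :=
  ∀ x : V, varCount E x ≤ 2

/-- Apply a substitution (a map from variables to constant words) to a word,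
i.e. the unique monoid homomorphism `(A ∪ V)* → A*` extending `σ` and fixing
every constant. -/
def applySub (σ : V → List A) (w : Word A V) : List A :=
  w.flatMap fun s =>
    match s with
    | Sum.inl a => [a]
    | Sum.inr x => σ x

/-- `σ` is a solution of the word equation `E`. -/
def IsSolution (σ : V → List A) (E : Equation A V) : Prop :=
  applySub σ E.1 = applySub σ E.2

/-- The length `|E| = |L| + |R|` of a word equation. -/
def eqLen (E : Equation A V) : ℕ := E.1.length + E.2.length

/-- The Nielsen transformation (Levi's method) rewriting relation on word
equations.  The rules `p1`–`p4` remove a nonempty prefix from an equation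
`α·w₁ = β·w₂`; the rules `eraseL`/`eraseR` erase a variable that is guessed to
denote the empty word (substituting `ε` for it everywhere). -/
inductive Nielsen [DecidableEq V] : Equation A V → Equation A V → Prop
  | eraseL (x : V) (w₁ w₂ : Word A V) :
      Nielsen (Sum.inr x :: w₁, w₂) (substVar x [] w₁, substVar x [] w₂)
  | eraseR (w₁ : Word A V) (x : V) (w₂ : Word A V) :
      Nielsen (w₁, Sum.inr x :: w₂) (substVar x [] w₁, substVar x [] w₂)
  | p1 (α : A ⊕ V) (w₁ w₂ : Word A V) :
      Nielsen (α :: w₁, α :: w₂) (w₁, w₂)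
  | p2 (a : A) (y : V) (w₁ w₂ : Word A V) :
      Nielsen (Sum.inl a :: w₁, Sum.inr y :: w₂)
        (substVar y [Sum.inl a, Sum.inr y] w₁,
          Sum.inr y :: substVar y [Sum.inl a, Sum.inr y] w₂)
  | p3 (x : V) (a : A) (w₁ w₂ : Word A V) :
      Nielsen (Sum.inr x :: w₁, Sum.inl a :: w₂)
        (Sum.inr x :: substVar x [Sum.inl a, Sum.inr x] w₁,
          substVar x [Sum.inl a, Sum.inr x] w₂)
  | p4L (x y : V) (hxy : x ≠ y) (w₁ w₂ : Word A V) :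
      Nielsen (Sum.inr x :: w₁, Sum.inr y :: w₂)
        (substVar y [Sum.inr x, Sum.inr y] w₁,
          Sum.inr y :: substVar y [Sum.inr x, Sum.inr y] w₂)
  | p4R (x y : V) (hxy : x ≠ y) (w₁ w₂ : Word A V) :
      Nielsen (Sum.inr x :: w₁, Sum.inr y :: w₂)
        (Sum.inr x :: substVar x [Sum.inr y, Sum.inr x] w₁,
          substVar x [Sum.inr y, Sum.inr x] w₂)

/-!
Soundness: erasing is the substitution `[ε/x]`, `p1` cancels a common first letter, and each of
`p2`–`p4` is a substitution `[αy/y]` followed by cancelling the common first letter `α`. Since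
`σ(w[u/y]) = σ[y ↦ σ(u)](w)`, a solution of the result of a step gives one of the equation before.

Completeness: let `σ` solve `E ≠ (ε, ε)`. If a leading variable `x` has `σ x = ε`, erase it.
Otherwise the images of the two leading letters are both prefixes of the same word, hence one is a
prefix of the other; this selects a rule among `p1`–`p4`, and deleting that prefix from the value of
the substituted variable gives a solution of the result whose left-hand image is strictly shorter.
The descent stops at `(ε, ε)` by well-founded induction on (image length, equation length).
-/

@[simp] lemma applySub_nil (σ : V → List A) : applySub σ ([] : Word A V) = [] := rfl

@[simp] lemma applySub_cons_inl (σ : V → List A) (a : A) (w : Word A V) :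
    applySub σ (Sum.inl a :: w) = a :: applySub σ w := by
  simp [applySub]

@[simp] lemma applySub_cons_inr (σ : V → List A) (x : V) (w : Word A V) :
    applySub σ (Sum.inr x :: w) = σ x ++ applySub σ w := by
  simp [applySub]

lemma applySub_cons (σ : V → List A) (s : A ⊕ V) (w : Word A V) :
    applySub σ (s :: w) = applySub σ [s] ++ applySub σ w := by
  simp [applySub]

@[simp] lemma applySub_append (σ : V → List A) (u v : Word A V) :
    applySub σ (u ++ v) = applySub σ u ++ applySub σ v := by
  simp [applySub]

lemma isSolution_append_append (σ : V → List A) (p L R : Word A V) :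
    IsSolution σ (p ++ L, p ++ R) ↔ IsSolution σ (L, R) := by
  simp [IsSolution]

section Nielsen

variable [DecidableEq V]

@[simp] lemma substVar_nil (x : V) (u : Word A V) : substVar x u ([] : Word A V) = [] := rfl

@[simp] lemma substVar_cons_inl (x : V) (u : Word A V) (a : A) (w : Word A V) :
    substVar x u (Sum.inl a :: w) = Sum.inl a :: substVar x u w := by
  simp [substVar]

@[simp] lemma substVar_cons_inr (x : V) (u : Word A V) (y : V) (w : Word A V) :
    substVar x u (Sum.inr y :: w) = (if y = x then u else [Sum.inr y]) ++ substVar x u w := by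
  simp [substVar]

lemma applySub_substVar (σ : V → List A) (x : V) (u w : Word A V) :
    applySub σ (substVar x u w) = applySub (Function.update σ x (applySub σ u)) w := by
  induction w with
  | nil => rfl
  | cons s w ih =>
    rcases s with a | y
    · simp [ih]
    · by_cases h : y = x <;> simp [h, ih]

lemma substVar_append (x : V) (u v w : Word A V) :
    substVar x u (v ++ w) = substVar x u v ++ substVar x u w := by
  simp [substVar]

lemma substVar_nil_sublist (x : V) (w : Word A V) : (substVar x [] w).Sublist w := by
  induction w with
  | nil => exact List.Sublist.slnil
  | cons s w ih =>
    rcases s with a | y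
    · simpa using ih
    · by_cases h : y = x
      · simpa [h] using ih.cons _
      · simpa [h] using ih

lemma inr_notMem_substVar_nil (x : V) (w : Word A V) : Sum.inr x ∉ substVar x [] w := by
  induction w with
  | nil => simp
  | cons s w ih =>
    rcases s with a | y
    · simpa using ih
    · by_cases h : y = x
      · simpa [h] using ih
      · simp [h, Ne.symm h, ih]

lemma length_substVar_nil_lt {x : V} {w : Word A V} (hx : Sum.inr x ∈ w) :
    (substVar x [] w).length < w.length :=
  (substVar_nil_sublist x w).length_le.lt_of_ne fun h =>
    inr_notMem_substVar_nil x w (((substVar_nil_sublist x w).eq_of_length h).symm ▸ hx)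

/-- The equation `E[u/x]`. -/
def substEq (x : V) (u : Word A V) (E : Equation A V) : Equation A V :=
  (substVar x u E.1, substVar x u E.2)

lemma isSolution_substEq (σ : V → List A) (x : V) (u : Word A V) (E : Equation A V) :
    IsSolution σ (substEq x u E) ↔ IsSolution (Function.update σ x (applySub σ u)) E := by
  simp only [IsSolution, substEq, applySub_substVar]

lemma isSolution_of_substEq_eq {σ : V → List A} {x : V} {u p : Word A V} {E E' : Equation A V}
    (hE : substEq x u E = (p ++ E'.1, p ++ E'.2)) (hσ : IsSolution σ E') :
    IsSolution (Function.update σ x (applySub σ u)) E := by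
  rwa [← isSolution_substEq, hE, isSolution_append_append]

theorem Nielsen.exists_isSolution {E E' : Equation A V} (h : Nielsen E E')
    {σ : V → List A} (hσ : IsSolution σ E') : ∃ τ : V → List A, IsSolution τ E := by
  cases h with
  | p1 α w₁ w₂ => exact ⟨σ, (isSolution_append_append σ [α] w₁ w₂).2 hσ⟩
  | eraseL x w₁ w₂ =>
    exact ⟨_, isSolution_of_substEq_eq (x := x) (u := []) (p := []) (by simp [substEq]) hσ⟩
  | eraseR w₁ x w₂ =>
    exact ⟨_, isSolution_of_substEq_eq (x := x) (u := []) (p := []) (by simp [substEq]) hσ⟩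
  | p2 a y w₁ w₂ =>
    exact ⟨_, isSolution_of_substEq_eq (x := y) (u := [Sum.inl a, Sum.inr y]) (p := [Sum.inl a])
      (by simp [substEq]) hσ⟩
  | p3 x a w₁ w₂ =>
    exact ⟨_, isSolution_of_substEq_eq (x := x) (u := [Sum.inl a, Sum.inr x]) (p := [Sum.inl a])
      (by simp [substEq]) hσ⟩
  | p4L x y hxy w₁ w₂ =>
    exact ⟨_, isSolution_of_substEq_eq (x := y) (u := [Sum.inr x, Sum.inr y]) (p := [Sum.inr x])
      (by simp [substEq, hxy]) hσ⟩
  | p4R x y hxy w₁ w₂ =>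
    exact ⟨_, isSolution_of_substEq_eq (x := x) (u := [Sum.inr y, Sum.inr x]) (p := [Sum.inr y])
      (by simp [substEq, hxy.symm]) hσ⟩

theorem exists_isSolution_of_reflTransGen {E : Equation A V}
    (h : Relation.ReflTransGen Nielsen E ([], [])) : ∃ σ : V → List A, IsSolution σ E := by
  induction h using Relation.ReflTransGen.head_induction_on with
  | refl => exact ⟨fun _ => [], rfl⟩
  | head hstep _ ih => exact hstep.exists_isSolution ih.choose_spec

/-- Erasing steps keep the image of the left-hand side and shorten the equation; all other steps
shorten that image. -/
def solutionRank (σ : V → List A) (E : Equation A V) : ℕ ×ₗ ℕ :=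
  toLex ((applySub σ E.1).length, eqLen E)

def HasDescent (σ : V → List A) (E : Equation A V) : Prop :=
  ∃ σ' E', Nielsen E E' ∧ IsSolution σ' E' ∧ solutionRank σ' E' < solutionRank σ E

lemma hasDescent_of_erase {σ : V → List A} {x : V} {E : Equation A V}
    (hN : Nielsen E (substEq x [] E)) (hσ : IsSolution σ E) (hx : σ x = [])
    (hmem : Sum.inr x ∈ E.1 ++ E.2) : HasDescent σ E := by
  have hupd : Function.update σ x (applySub σ []) = σ := by
    rw [applySub_nil, ← hx, Function.update_eq_self]
  refine ⟨σ, _, hN, by rwa [isSolution_substEq, hupd],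
    Prod.Lex.toLex_lt_toLex.2 (Or.inr ⟨?_, ?_⟩)⟩
  · simp only [substEq, applySub_substVar, hupd]
  · simpa [eqLen, substEq, substVar_append] using length_substVar_nil_lt hmem

lemma hasDescent_of_substEq {σ : V → List A} {y : V} {t : List A} {u p : Word A V}
    {E E' : Equation A V} (hN : Nielsen E E') (hσ : IsSolution σ E)
    (hu : applySub (Function.update σ y t) u = σ y) (hE : substEq y u E = (p ++ E'.1, p ++ E'.2))
    (hp : applySub (Function.update σ y t) p ≠ []) : HasDescent σ E := by
  set τ := Function.update σ y t
  have hτ : Function.update τ y (applySub τ u) = σ := by simp [τ, hu]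
  have hsub := isSolution_substEq τ y u E
  rw [hτ, hE, isSolution_append_append] at hsub
  refine ⟨τ, E', hN, hsub.2 hσ, Prod.Lex.toLex_lt_toLex.2 (Or.inl ?_)⟩
  have hleft : applySub σ E.1 = applySub τ p ++ applySub τ E'.1 := by
    rw [← hτ, ← applySub_substVar, show substVar y u E.1 = p ++ E'.1 from congrArg Prod.fst hE,
      applySub_append]
  simp only [hleft, List.length_append]
  have := List.length_pos_iff.2 hp
  omega

lemma hasDescent_of_same_head {σ : V → List A} {α : A ⊕ V} {w₁ w₂ : Word A V}
    (hσ : IsSolution σ (α :: w₁, α :: w₂)) (hα : applySub σ [α] ≠ []) :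
    HasDescent σ (α :: w₁, α :: w₂) := by
  refine ⟨σ, (w₁, w₂), Nielsen.p1 α w₁ w₂, (isSolution_append_append σ [α] w₁ w₂).1 hσ,
    Prod.Lex.toLex_lt_toLex.2 (Or.inl ?_)⟩
  have := List.length_pos_iff.2 hα
  show (applySub σ w₁).length < (applySub σ (α :: w₁)).length
  rw [applySub_cons, List.length_append]
  omega

lemma hasDescent_of_heads_ne_nil {σ : V → List A} {α β : A ⊕ V} {w₁ w₂ : Word A V}
    (hσ : IsSolution σ (α :: w₁, β :: w₂)) (hα : applySub σ [α] ≠ []) (hβ : applySub σ [β] ≠ []) :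
    HasDescent σ (α :: w₁, β :: w₂) := by
  rcases α with a | x <;> rcases β with b | y
  · obtain ⟨rfl, -⟩ : a = b ∧ _ := by simpa [IsSolution] using hσ
    exact hasDescent_of_same_head hσ hα
  · have hσ' : a :: applySub σ w₁ = σ y ++ applySub σ w₂ := by simpa [IsSolution] using hσ
    obtain ⟨hy, -⟩ | ⟨t, hy, -⟩ := List.cons_eq_append_iff.1 hσ'
    · simp [hy] at hβ
    · exact hasDescent_of_substEq (y := y) (t := t) (u := [Sum.inl a, Sum.inr y])
        (p := [Sum.inl a]) (Nielsen.p2 a y w₁ w₂) hσ (by simp [hy]) (by simp [substEq]) (by simp)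
  · have hσ' : σ x ++ applySub σ w₁ = b :: applySub σ w₂ := by simpa [IsSolution] using hσ
    obtain ⟨hx, -⟩ | ⟨t, hx, -⟩ := List.append_eq_cons_iff.1 hσ'
    · simp [hx] at hα
    · exact hasDescent_of_substEq (y := x) (t := t) (u := [Sum.inl b, Sum.inr x])
        (p := [Sum.inl b]) (Nielsen.p3 x b w₁ w₂) hσ (by simp [hx]) (by simp [substEq]) (by simp)
  · by_cases hxy : x = y
    · subst hxy
      exact hasDescent_of_same_head hσ hα
    have hσ' : σ x ++ applySub σ w₁ = σ y ++ applySub σ w₂ := by simpa [IsSolution] using hσ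
    obtain ⟨t, hy, -⟩ | ⟨t, hx, -⟩ := List.append_eq_append_iff.1 hσ'
    · exact hasDescent_of_substEq (y := y) (t := t) (u := [Sum.inr x, Sum.inr y])
        (p := [Sum.inr x]) (Nielsen.p4L x y hxy w₁ w₂) hσ (by simp [hy, hxy])
        (by simp [substEq, hxy]) (by simpa [hxy] using hα)
    · exact hasDescent_of_substEq (y := x) (t := t) (u := [Sum.inr y, Sum.inr x])
        (p := [Sum.inr y]) (Nielsen.p4R x y hxy w₁ w₂) hσ (by simp [hx, Ne.symm hxy])
        (by simp [substEq, Ne.symm hxy]) (by simpa [Ne.symm hxy] using hβ)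

lemma hasDescent_of_isSolution {σ : V → List A} {E : Equation A V} (hσ : IsSolution σ E)
    (hE : E ≠ ([], [])) : HasDescent σ E := by
  have erasable : ∀ {s : A ⊕ V}, applySub σ [s] = [] → ∃ x, s = Sum.inr x ∧ σ x = [] := by
    rintro (a | x) h
    · simp at h
    · exact ⟨x, rfl, by simpa using h⟩
  have eraseL : ∀ {x w₁ w₂}, IsSolution σ (Sum.inr x :: w₁, w₂) → σ x = [] →
      HasDescent σ (Sum.inr x :: w₁, w₂) := fun {x w₁ w₂} hσ hx =>
    hasDescent_of_erase (by simpa [substEq] using Nielsen.eraseL x w₁ w₂) hσ hx (by simp)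
  have eraseR : ∀ {x w₁ w₂}, IsSolution σ (w₁, Sum.inr x :: w₂) → σ x = [] →
      HasDescent σ (w₁, Sum.inr x :: w₂) := fun {x w₁ w₂} hσ hx =>
    hasDescent_of_erase (by simpa [substEq] using Nielsen.eraseR w₁ x w₂) hσ hx (by simp)
  rcases E with ⟨_ | ⟨α, w₁⟩, _ | ⟨β, w₂⟩⟩
  · exact absurd rfl hE
  · obtain ⟨y, rfl, hy⟩ := erasable
      (List.append_eq_nil_iff.1 ((applySub_cons σ β w₂).symm.trans hσ.symm)).1
    exact eraseR hσ hy
  · obtain ⟨x, rfl, hx⟩ := erasable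
      (List.append_eq_nil_iff.1 ((applySub_cons σ α w₁).symm.trans hσ)).1
    exact eraseL hσ hx
  by_cases hα : applySub σ [α] = []
  · obtain ⟨x, rfl, hx⟩ := erasable hα
    exact eraseL hσ hx
  by_cases hβ : applySub σ [β] = []
  · obtain ⟨y, rfl, hy⟩ := erasable hβ
    exact eraseR hσ hy
  exact hasDescent_of_heads_ne_nil hσ hα hβ

theorem reflTransGen_nil_of_isSolution {σ : V → List A} {E : Equation A V}
    (hσ : IsSolution σ E) : Relation.ReflTransGen Nielsen E ([], []) := by
  generalize hr : solutionRank σ E = r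
  induction r using WellFoundedLT.induction generalizing σ E with
  | _ r ih =>
  by_cases hE : E = ([], [])
  · rw [hE]
  obtain ⟨σ', E', hN, hσ', hlt⟩ := hasDescent_of_isSolution hσ hE
  exact .head hN (ih _ (hr ▸ hlt) hσ' rfl)

end Nielsen

theorem quadratic_solvable_iff_nielsen_reaches_trivial_general
    [DecidableEq V] (E : Equation A V) :
    (∃ σ : V → List A, IsSolution σ E) ↔
      Relation.ReflTransGen Nielsen E (([], []) : Equation A V) :=
  ⟨fun ⟨_, hσ⟩ => reflTransGen_nil_of_isSolution hσ, exists_isSolution_of_reflTransGen⟩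

/-- A quadratic word equation has a solution iff the trivial
equation `ε = ε` is reachable from it under the Nielsen transformation. -/
theorem quadratic_solvable_iff_nielsen_reaches_trivial
    [Finite A] [Finite V] [DecidableEq A] [DecidableEq V]
    (E : Equation A V) (hq : Quadratic E) :
    (∃ σ : V → List A, IsSolution σ E) ↔
      Relation.ReflTransGen Nielsen E (([], []) : Equation A V) :=
  quadratic_solvable_iff_nielsen_reaches_trivial_general E

end WordEq
end

section
/- If E is a quadratic word equation and E ⇒ E' is a step of the Nielsen transformation, then the length of E' is at most the length of E, i.e., |E'| ≤ |E|. -/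
/-!
Erasing a variable and rule P1 only delete letters. Rules P2–P4 delete one head letter and
replace every further occurrence of the other head, a variable, by a word of length two, adding
one letter per occurrence; in a quadratic equation there is at most one such occurrence.
-/

namespace WordEq

variable {A V : Type*}

-- `List.count` on `A ⊕ V` uses the derived `BEq` of `Sum`, for which the library has no such instance.
instance [DecidableEq A] [DecidableEq V] : LawfulBEq (A ⊕ V) where
  eq_of_beq {a b} h := by cases a <;> cases b <;> first | exact congrArg _ (eq_of_beq h) | cases h
  rfl {a} := by cases a with
    | inl a => exact beq_self_eq_true a
    | inr x => exact beq_self_eq_true x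

section
variable [DecidableEq V]

theorem substVar_cons_inr_self (x : V) (r w : Word A V) :
    substVar x r (Sum.inr x :: w) = r ++ substVar x r w := by
  simp [substVar]

theorem substVar_cons_of_ne (x : V) (r : Word A V) {s : A ⊕ V} (hs : s ≠ Sum.inr x)
    (w : Word A V) : substVar x r (s :: w) = s :: substVar x r w := by
  rcases s with a | y
  · rfl
  · simp [substVar, show y ≠ x by rintro rfl; exact hs rfl]

variable [DecidableEq A]

theorem length_substVar_add_count (x : V) (r w : Word A V) :
    (substVar x r w).length + w.count (Sum.inr x) =
      w.length + r.length * w.count (Sum.inr x) := by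
  induction w with
  | nil => rfl
  | cons s w ih =>
    by_cases hs : s = Sum.inr x
    · subst hs
      rw [substVar_cons_inr_self, List.count_cons_self, List.length_append, List.length_cons,
        Nat.mul_succ]
      omega
    · rw [substVar_cons_of_ne x r hs, List.count_cons_of_ne hs, List.length_cons,
        List.length_cons]
      omega

theorem length_substVar_nil_le (x : V) (w : Word A V) :
    (substVar x [] w).length ≤ w.length := by
  have := length_substVar_add_count x [] w
  simp only [List.length_nil, Nat.zero_mul, Nat.add_zero] at this
  omega

theorem length_substVar_of_length_eq_two (x : V) {r : Word A V} (hr : r.length = 2)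
    (w : Word A V) : (substVar x r w).length = w.length + w.count (Sum.inr x) := by
  have := length_substVar_add_count x r w
  rw [hr] at this
  omega

theorem length_substVar_add_length_substVar_le (x : V) (r : Word A V) (hr : r.length = 2)
    {w₁ w₂ : Word A V} (hc : w₁.count (Sum.inr x) + w₂.count (Sum.inr x) ≤ 1) :
    (substVar x r w₁).length + (substVar x r w₂).length ≤ w₁.length + w₂.length + 1 := by
  rw [length_substVar_of_length_eq_two x hr, length_substVar_of_length_eq_two x hr]
  omega

theorem Quadratic.count_add_count_le_one_of_cons_left {x : V} {β : A ⊕ V} {w₁ w₂ : Word A V}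
    (hq : Quadratic (Sum.inr x :: w₁, β :: w₂)) :
    w₁.count (Sum.inr x) + w₂.count (Sum.inr x) ≤ 1 := by
  have h := hq x
  have : w₂.count (Sum.inr x) ≤ (β :: w₂).count (Sum.inr x) := List.count_le_count_cons
  simp only [varCount, List.cons_append, List.count_cons_self, List.count_append] at h
  omega

theorem Quadratic.count_add_count_le_one_of_cons_right {α : A ⊕ V} {y : V} {w₁ w₂ : Word A V}
    (hq : Quadratic (α :: w₁, Sum.inr y :: w₂)) :
    w₁.count (Sum.inr y) + w₂.count (Sum.inr y) ≤ 1 := by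
  have h := hq y
  have : w₁.count (Sum.inr y) ≤ (α :: w₁).count (Sum.inr y) := List.count_le_count_cons
  simp only [varCount, List.count_append, List.count_cons_self] at h
  omega

end

theorem nielsen_length_le_general
    [DecidableEq A] [DecidableEq V]
    {E E' : Equation A V} (hq : Quadratic E) (h : Nielsen E E') :
    eqLen E' ≤ eqLen E := by
  cases h <;> simp only [eqLen, List.length_cons]
  case eraseL x w₁ w₂ | eraseR w₁ x w₂ =>
    linarith [length_substVar_nil_le x w₁, length_substVar_nil_le x w₂]
  case p1 => omega
  case p2 a y w₁ w₂ =>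
    linarith [length_substVar_add_length_substVar_le y [.inl a, .inr y] rfl
      hq.count_add_count_le_one_of_cons_right]
  case p3 x a w₁ w₂ =>
    linarith [length_substVar_add_length_substVar_le x [.inl a, .inr x] rfl
      hq.count_add_count_le_one_of_cons_left]
  case p4L x y _ w₁ w₂ =>
    linarith [length_substVar_add_length_substVar_le y [.inr x, .inr y] rfl
      hq.count_add_count_le_one_of_cons_right]
  case p4R x y _ w₁ w₂ =>
    linarith [length_substVar_add_length_substVar_le x [.inr y, .inr x] rfl
      hq.count_add_count_le_one_of_cons_left]

/-- A Nielsen transformation step never increases the length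
of a quadratic word equation. -/
theorem nielsen_length_le
    [Finite A] [Finite V] [DecidableEq A] [DecidableEq V]
    {E E' : Equation A V} (hq : Quadratic E) (h : Nielsen E E') :
    eqLen E' ≤ eqLen E :=
  nielsen_length_le_general hq h

end WordEq
end

section
/- Let A be an alphabet containing two distinct letters a and b. For all natural numbers n_x, n_y, n_z: there exist words u, v, w ∈ A* with |u| = n_x, |v| = n_y, |w| = n_z and u·ab·v = v·w if and only if n_z = n_x + 2. In other words, the length abstraction of the quadratic word equation x·ab·y = y·z is {(n_x, n_y, n_z) ∈ ℕ³ : n_z = n_x + 2}. -/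
/-!
Comparing lengths forces `n_z = n_x + 2`. Conversely, for every nonempty word `s` the equation
`s·y = y·z` has solutions with `|y|` arbitrary: from `s·v = v·(c·w)` one gets
`s·(v·c) = (v·c)·(w·c)`, so `y` grows by one letter while `z` is rotated. Apply this to `s = u·ab`.
-/

theorem exists_append_eq_append_of_ne_nil {α : Type*} {s : List α} (hs : s ≠ []) (n : ℕ) :
    ∃ v w : List α, v.length = n ∧ w.length = s.length ∧ s ++ v = v ++ w := by
  induction n with
  | zero => exact ⟨[], s, rfl, rfl, by simp⟩
  | succ n ih =>
    obtain ⟨v, w, hv, hw, h⟩ := ih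
    obtain ⟨c, w', rfl⟩ : ∃ c w', w = c :: w' :=
      List.exists_cons_of_ne_nil fun hw0 => hs (by simpa [hw0, eq_comm] using hw)
    refine ⟨v ++ [c], w' ++ [c], by simp [hv], by simpa using hw, ?_⟩
    rw [← List.append_assoc, h]
    simp

theorem lenAbs_xaby_eq_yz_general {A : Type*} (a b : A)
    (nx ny nz : ℕ) :
    (∃ u v w : List A,
        u.length = nx ∧ v.length = ny ∧ w.length = nz ∧
          u ++ [a, b] ++ v = v ++ w) ↔ nz = nx + 2 := by
  constructor
  · rintro ⟨u, v, w, rfl, rfl, rfl, h⟩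
    have := congrArg List.length h
    simp only [List.length_append, List.length_cons, List.length_nil] at this
    omega
  · rintro rfl
    obtain ⟨v, w, hv, hw, h⟩ :=
      exists_append_eq_append_of_ne_nil (s := List.replicate nx a ++ [a, b]) (by simp) ny
    exact ⟨List.replicate nx a, v, w, List.length_replicate, hv, by simp [hw], h⟩

/-- Over an alphabet containing two distinct letters `a` and
`b`, the length abstraction of the quadratic word equation `x·ab·y = y·z` is
`{(n_x, n_y, n_z) : n_z = n_x + 2}`: for all naturals `n_x, n_y, n_z` there
are words `u, v, w` of these lengths with `u ++ ab ++ v = v ++ w` iff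
`n_z = n_x + 2`. -/
theorem lenAbs_xaby_eq_yz {A : Type*} (a b : A) (hab : a ≠ b)
    (nx ny nz : ℕ) :
    (∃ u v w : List A,
        u.length = nx ∧ v.length = ny ∧ w.length = nz ∧
          u ++ [a, b] ++ v = v ++ w) ↔ nz = nx + 2 :=
  lenAbs_xaby_eq_yz_general a b nx ny nz
end

section
/- Let A be an alphabet containing two distinct letters a and b. The set S = {(m, n) ∈ ℕ² : there exist u, v ∈ A* with |u| = m, |v| = n and u·ab·v = v·ab·u} is not semilinear. Consequently, there is a quadratic word equation (namely x·ab·y = y·ab·x) whose length abstraction is not Presburger-definable. -/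
/-!
Writing `x = u·ab` and `y = v·ab`, the equation `u·ab·v = v·ab·u` says that `x` and `y` commute,
so by the Fine–Wilf periodicity lemma `xy` has period `gcd(|x|, |y|)`; as `ab` is a factor of
`xy` and `a ≠ b`, this gcd is not `1`. Conversely, if a prime `p` divides `|u| + 2` and `|v| + 2`,
powers of `a^(p-2)·ab` give a solution. So the set of length pairs is
`{(m, n) | gcd(m + 2, n + 2) ≠ 1}`. Semilinear sets are closed under intersection, projection and
complement, so if this set were semilinear, so would be
`{m | ∀ n < m, gcd(m + 2, n + 2) = 1} = {m | m + 2 is prime}`, and hence the set of primes; but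
the primes are not ultimately periodic.
-/

/-- A linear subset of a commutative monoid: a base point plus all
`ℕ`-combinations of finitely many periods. -/
def IsLinearSet' {M : Type*} [AddCommMonoid M] (S : Set M) : Prop :=
  ∃ (b : M) (m : ℕ) (p : Fin m → M),
    S = {v | ∃ lam : Fin m → ℕ, v = b + ∑ i, lam i • p i}

/-- A semilinear set is a finite union of linear sets.  By the
Ginsburg–Spanier theorem, a subset of `ℕ^k` is Presburger-definable iff it is
semilinear. -/
def IsSemilinearSet' {M : Type*} [AddCommMonoid M] (S : Set M) : Prop :=
  ∃ (n : ℕ) (T : Fin n → Set M), (∀ i, IsLinearSet' (T i)) ∧ S = ⋃ i, T i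

section Semilinear

open Set Pointwise

variable {M : Type*} [AddCommMonoid M] {S : Set M}

theorem IsLinearSet'.isLinearSet (h : IsLinearSet' S) : IsLinearSet S := by
  obtain ⟨b, m, p, rfl⟩ := h
  refine isLinearSet_iff_exists_fin_addMonoidHom.2
    ⟨b, m, (Fintype.linearCombination ℕ p).toAddMonoidHom, ?_⟩
  ext v
  simp [mem_vadd_set, Fintype.linearCombination_apply, eq_comm]

theorem IsSemilinearSet'.isSemilinearSet (h : IsSemilinearSet' S) : IsSemilinearSet S := by
  obtain ⟨n, T, hT, rfl⟩ := h
  exact .iUnion fun i => (hT i).isLinearSet.isSemilinearSet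

theorem isLinearSet_setOf_snd_lt_fst : IsLinearSet {x : ℕ × ℕ | x.2 < x.1} := by
  refine ⟨(1, 0), {(1, 0), (1, 1)}, by simp, ?_⟩
  ext ⟨m, n⟩
  simp only [mem_ofPred_eq, mem_vadd_set, SetLike.mem_coe, AddSubmonoid.mem_closure_pair]
  constructor
  · intro h
    refine ⟨(m - 1, n), ⟨m - 1 - n, n, ?_⟩, ?_⟩
    · simp only [Prod.smul_mk, smul_eq_mul, mul_one, Prod.mk_add_mk, Prod.mk.injEq]
      omega
    · simp only [vadd_eq_add, Prod.mk_add_mk, zero_add, Prod.mk.injEq, and_true]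
      omega
  · rintro ⟨_, ⟨k, l, rfl⟩, h⟩
    simp only [Prod.smul_mk, smul_eq_mul, mul_one, Prod.mk_add_mk, zero_add, vadd_eq_add,
      Prod.ext_iff] at h
    omega

namespace Nat

theorem not_isSemilinearSet_setOf_prime : ¬ IsSemilinearSet {p : ℕ | p.Prime} := by
  rw [isSemilinearSet_iff_ultimately_periodic]
  rintro ⟨k, d, hd, hper⟩
  obtain ⟨q, hkq, hq⟩ := exists_infinite_primes k
  have hstep : ∀ j, (q + j * d).Prime := fun j => by
    induction j with
    | zero => simpa
    | succ j ih => simpa [add_mul, ← add_assoc] using (hper _ (by omega)).1 ih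
  have hcomposite : q + q * d = q * (1 + d) := by ring
  exact not_prime_mul hq.one_lt.ne' (by omega) (hcomposite ▸ hstep q)

theorem prime_add_two_iff_forall_lt_coprime (m : ℕ) :
    (m + 2).Prime ↔ ∀ n < m, Coprime (m + 2) (n + 2) := by
  refine ⟨fun hp n hn => coprime_of_lt_prime (by omega) (by omega) hp, fun h => ?_⟩
  by_contra hp
  have hlt := (not_prime_iff_minFac_lt (by omega)).1 hp
  have hmin : 2 ≤ (m + 2).minFac := (minFac_prime (by omega)).two_le
  have := h ((m + 2).minFac - 2) (by omega)
  rw [Nat.sub_add_cancel hmin, coprime_comm, Nat.coprime_iff_gcd_eq_one,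
    gcd_eq_left (minFac_dvd _)] at this
  omega

theorem not_isSemilinearSet_setOf_not_coprime_add_two :
    ¬ IsSemilinearSet {x : ℕ × ℕ | ¬ Coprime (x.1 + 2) (x.2 + 2)} := by
  intro hs
  have hshifted : IsSemilinearSet {m : ℕ | (m + 2).Prime} := by
    have := ((hs.inter isLinearSet_setOf_snd_lt_fst.isSemilinearSet).image
      (AddMonoidHom.fst ℕ ℕ)).compl
    convert this using 1
    ext m
    simp [prime_add_two_iff_forall_lt_coprime, not_imp_comm, Coprime]
  apply not_isSemilinearSet_setOf_prime
  convert hshifted.vadd 2 using 1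
  ext p
  simp only [mem_ofPred_eq, mem_vadd_set, vadd_eq_add]
  refine ⟨fun hp => ⟨p - 2, ?_, ?_⟩, ?_⟩
  · rwa [Nat.sub_add_cancel hp.two_le]
  · have := hp.two_le; omega
  · rintro ⟨m, hm, rfl⟩
    rwa [add_comm]

end Nat

end Semilinear

namespace List

variable {α : Type*}

theorem hasPeriod_gcd_of_append_comm {x y : List α} (h : x ++ y = y ++ x) :
    (x ++ y).HasPeriod (x.length.gcd y.length) := by
  have hx : (x ++ y).HasPeriod x.length := by
    rw [HasPeriod, take_left]
    exact ⟨x, by rw [append_assoc, ← h]⟩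
  have hy : (x ++ y).HasPeriod y.length := by
    rw [h, HasPeriod, take_left]
    exact ⟨y, by rw [append_assoc, h]⟩
  exact hx.gcd hy (by simp)

theorem append_append_comm_iff (u z v : List α) :
    u ++ z ++ v = v ++ z ++ u ↔ (u ++ z) ++ (v ++ z) = (v ++ z) ++ (u ++ z) := by
  simp only [← append_assoc, append_cancel_right_eq]

theorem not_coprime_of_append_pair_comm {a b : α} (hab : a ≠ b) {u v : List α}
    (h : u ++ [a, b] ++ v = v ++ [a, b] ++ u) :
    ¬ Nat.Coprime (u.length + 2) (v.length + 2) := by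
  intro hcop
  have hper := hasPeriod_gcd_of_append_comm ((append_append_comm_iff u [a, b] v).1 h)
  simp only [length_append, length_cons, length_nil, hcop.gcd_eq_one] at hper
  have : [a, b].HasPeriod 1 := hper.factor
  exact hab (by simpa using hasPeriod_iff_getElem?.1 this 0 (by simp))

theorem exists_append_pair_comm_of_not_coprime (a b : α) {m n : ℕ}
    (h : ¬ Nat.Coprime (m + 2) (n + 2)) :
    ∃ u v : List α, u.length = m ∧ v.length = n ∧ u ++ [a, b] ++ v = v ++ [a, b] ++ u := by
  obtain ⟨p, hp, ⟨i, hi⟩, ⟨j, hj⟩⟩ := Nat.Prime.not_coprime_iff_dvd.1 h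
  obtain ⟨i, rfl⟩ := Nat.exists_eq_add_one_of_ne_zero (n := i) (by rintro rfl; simp at hi)
  obtain ⟨j, rfl⟩ := Nat.exists_eq_add_one_of_ne_zero (n := j) (by rintro rfl; simp at hj)
  have hp2 := hp.two_le
  set w := replicate (p - 2) a
  set t := w ++ [a, b]
  have hlen (k : ℕ) : ((replicate k t).flatten ++ w).length + 2 = p * (k + 1) := by
    have ht : t.length = p := by
      simp only [t, w, length_append, length_replicate, length_cons, length_nil]
      omega
    simp only [length_append, length_flatten, map_replicate, ht, sum_replicate, smul_eq_mul,
      length_replicate, w]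
    rw [mul_add_one, mul_comm]
    omega
  have hpow (k : ℕ) : (replicate k t).flatten ++ w ++ [a, b] = (replicate (k + 1) t).flatten := by
    simp [replicate_succ', t]
  refine ⟨(replicate i t).flatten ++ w, (replicate j t).flatten ++ w, ?_, ?_, ?_⟩
  · have := hlen i; omega
  · have := hlen j; omega
  · rw [append_append_comm_iff, hpow, hpow, ← flatten_append, ← flatten_append, ← replicate_add,
      ← replicate_add, add_comm]

theorem setOf_lengths_append_pair_comm {a b : α} (hab : a ≠ b) :
    {p : ℕ × ℕ | ∃ u v : List α,
      u.length = p.1 ∧ v.length = p.2 ∧ u ++ [a, b] ++ v = v ++ [a, b] ++ u} =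
      {p | ¬ Nat.Coprime (p.1 + 2) (p.2 + 2)} := by
  ext ⟨m, n⟩
  constructor
  · rintro ⟨u, v, rfl, rfl, h⟩
    exact not_coprime_of_append_pair_comm hab h
  · exact exists_append_pair_comm_of_not_coprime a b

end List

namespace WordEq

variable {A V : Type*}

/-- The length abstraction of a word equation: the set of tuples of lengths of
the variables under the solutions of `E`. -/
def lenAbs (E : Equation A V) : Set (V → ℕ) :=
  {v | ∃ σ : V → List A, IsSolution σ E ∧ ∀ x : V, (σ x).length = v x}

def xabyEq (a b : A) : Equation A (Fin 2) :=
  ([.inr 0, .inl a, .inl b, .inr 1], [.inr 1, .inl a, .inl b, .inr 0])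

theorem quadratic_xabyEq [DecidableEq A] (a b : A) : Quadratic (xabyEq a b) := by
  intro x
  fin_cases x <;> exact le_of_eq rfl

theorem isSolution_xabyEq_iff (a b : A) (σ : Fin 2 → List A) :
    IsSolution σ (xabyEq a b) ↔ σ 0 ++ [a, b] ++ σ 1 = σ 1 ++ [a, b] ++ σ 0 := by
  simp [IsSolution, xabyEq, applySub]

def lenPair : (Fin 2 → ℕ) →+ ℕ × ℕ :=
  (Pi.evalAddMonoidHom (fun _ => ℕ) 0).prod (Pi.evalAddMonoidHom (fun _ => ℕ) 1)

theorem lenPair_image_lenAbs_xabyEq (a b : A) :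
    lenPair '' lenAbs (xabyEq a b) = {p : ℕ × ℕ | ∃ u v : List A,
      u.length = p.1 ∧ v.length = p.2 ∧ u ++ [a, b] ++ v = v ++ [a, b] ++ u} := by
  ext p
  constructor
  · rintro ⟨l, ⟨σ, hσ, hl⟩, rfl⟩
    exact ⟨σ 0, σ 1, hl 0, hl 1, (isSolution_xabyEq_iff a b σ).1 hσ⟩
  · obtain ⟨m, n⟩ := p
    rintro ⟨u, v, rfl, rfl, h⟩
    refine ⟨![u.length, v.length], ⟨![u, v], (isSolution_xabyEq_iff a b _).2 h, ?_⟩, rfl⟩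
    intro x
    fin_cases x <;> rfl

/-- For distinct letters `a, b`, the set of pairs of lengths
`(|u|, |v|)` of words satisfying `u·ab·v = v·ab·u` is not semilinear (hence
not Presburger-definable).  Consequently, there is a quadratic word equation
(namely `x·ab·y = y·ab·x`) whose length abstraction is not
Presburger-definable. -/
theorem lenAbs_xaby_eq_yabx_not_semilinear
    {A : Type*} [DecidableEq A] (a b : A) (hab : a ≠ b) :
    ¬ IsSemilinearSet' {p : ℕ × ℕ | ∃ u v : List A,
        u.length = p.1 ∧ v.length = p.2 ∧
          u ++ [a, b] ++ v = v ++ [a, b] ++ u} ∧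
    ∃ E : Equation A (Fin 2), Quadratic E ∧ ¬ IsSemilinearSet' (lenAbs E) := by
  have hnot : ¬ IsSemilinearSet {p : ℕ × ℕ | ∃ u v : List A,
      u.length = p.1 ∧ v.length = p.2 ∧ u ++ [a, b] ++ v = v ++ [a, b] ++ u} := by
    rw [List.setOf_lengths_append_pair_comm hab]
    exact Nat.not_isSemilinearSet_setOf_not_coprime_add_two
  refine ⟨fun h => hnot h.isSemilinearSet, xabyEq a b, quadratic_xabyEq a b, fun h => hnot ?_⟩
  rw [← lenPair_image_lenAbs_xabyEq]
  exact h.isSemilinearSet.image lenPair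

end WordEq
end

section
/- Let A be an alphabet containing two distinct letters a and b. For all natural numbers m, n: there exist words u, v ∈ A* with |u| = m, |v| = n and u·ab·v = v·ab·u if and only if m = n, or (m = 0 and n is even), or (n = 0 and m is even), or (m > 0 and n > 0 and gcd(m + 2, n + 2) > 1). -/
/-!
Since `u·ab·v = v·ab·u` says exactly that `u·ab` and `v·ab` commute, the Lyndon–Schützenberger
theorem makes both powers of one word `t`. As `t` contains the distinct letters `a` and `b`,
`2 ≤ |t|`, and `|t|` divides `m + 2` and `n + 2`. Conversely, if `d ≥ 2` divides both, put
`t = a^(d-2)·ab`; the words `tⁱ·a^(d-2)` satisfy `(tⁱ·a^(d-2))·ab·(tʲ·a^(d-2)) = t^(i+j+1)·a^(d-2)`,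
which is symmetric in `i` and `j`. The disjunction in the statement is just `1 < gcd (m+2) (n+2)`.
-/

namespace List

variable {α : Type*}

theorem exists_eq_flatten_replicate_of_append_comm {x y : List α} (h : x ++ y = y ++ x) :
    ∃ (t : List α) (k l : ℕ), x = (replicate k t).flatten ∧ y = (replicate l t).flatten := by
  induction hN : x.length + y.length using Nat.strong_induction_on generalizing x y with
  | _ N ih =>
  wlog hle : x.length ≤ y.length generalizing x y
  · obtain ⟨t, k, l, hy, hx⟩ := this h.symm (by omega) (by omega)
    exact ⟨t, l, k, hx, hy⟩
  rcases eq_or_ne x [] with rfl | hx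
  · exact ⟨y, 0, 1, rfl, by simp⟩
  obtain ⟨z, rfl⟩ : x <+: y :=
    prefix_of_prefix_length_le (h ▸ prefix_append x y) (prefix_append y x) hle
  have hxz : x ++ z = z ++ x := append_cancel_left (by rw [h, append_assoc])
  have hlt : x.length + z.length < N := by
    have := length_pos_iff.mpr hx
    simp only [← hN, length_append]; omega
  obtain ⟨t, k, l, rfl, rfl⟩ := ih _ hlt hxz rfl
  exact ⟨t, k, k + l, rfl, by rw [replicate_add, flatten_append]⟩

theorem two_le_length_of_mem_of_mem {a b : α} {t : List α} (hab : a ≠ b) (ha : a ∈ t)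
    (hb : b ∈ t) : 2 ≤ t.length :=
  (subperm_of_subset (l₁ := [a, b]) (by simpa using hab) (by simp [subset_def, ha, hb])).length_le

theorem one_lt_gcd_length_of_append_comm {a b : α} {x y : List α} (hab : a ≠ b) (ha : a ∈ x)
    (hb : b ∈ x) (h : x ++ y = y ++ x) : 1 < Nat.gcd x.length y.length := by
  obtain ⟨t, k, l, rfl, rfl⟩ := exists_eq_flatten_replicate_of_append_comm h
  have hmem {c : α} (hc : c ∈ (replicate k t).flatten) : c ∈ t := by
    obtain ⟨s, hs, hcs⟩ := mem_flatten.mp hc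
    exact eq_of_mem_replicate hs ▸ hcs
  have ht : 2 ≤ t.length := two_le_length_of_mem_of_mem hab (hmem ha) (hmem hb)
  have hdvd : t.length ∣ Nat.gcd (replicate k t).flatten.length (replicate l t).flatten.length :=
    Nat.dvd_gcd (by simp) (by simp)
  have hpos : 0 < (replicate k t).flatten.length := length_pos_of_mem ha
  exact ht.trans (Nat.le_of_dvd (Nat.gcd_pos_of_pos_left _ hpos) hdvd)

theorem flatten_replicate_append_append_flatten_replicate (c p : List α) (r s : ℕ) :
    (replicate r (c ++ p)).flatten ++ c ++ p ++ ((replicate s (c ++ p)).flatten ++ c) =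
      (replicate (r + 1 + s) (c ++ p)).flatten ++ c := by
  simp only [replicate_add, flatten_append, replicate_one, flatten_cons, flatten_nil,
    append_nil, append_assoc]

theorem exists_append_append_comm_of_dvd {p : List α} (c : α) (hp : p ≠ []) {d m n : ℕ}
    (hd : p.length ≤ d) (hm : d ∣ m + p.length) (hn : d ∣ n + p.length) :
    ∃ u v : List α, u.length = m ∧ v.length = n ∧ u ++ p ++ v = v ++ p ++ u := by
  have hp₀ : 0 < p.length := length_pos_iff.mpr hp
  obtain ⟨i, hi⟩ := hm
  obtain ⟨j, hj⟩ := hn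
  obtain ⟨i, rfl⟩ : ∃ i', i = i' + 1 :=
    Nat.exists_eq_add_one.mpr (Nat.pos_of_ne_zero (by rintro rfl; omega))
  obtain ⟨j, rfl⟩ : ∃ j', j = j' + 1 :=
    Nat.exists_eq_add_one.mpr (Nat.pos_of_ne_zero (by rintro rfl; omega))
  set c' := replicate (d - p.length) c
  have ht : (c' ++ p).length = d := by simp [c']; omega
  refine ⟨(replicate i (c' ++ p)).flatten ++ c', (replicate j (c' ++ p)).flatten ++ c', ?_, ?_, ?_⟩
  · simp [ht, c']
    grind
  · simp [ht, c']
    grind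
  · rw [flatten_replicate_append_append_flatten_replicate,
      flatten_replicate_append_append_flatten_replicate, show i + 1 + j = j + 1 + i by omega]

end List

theorem Nat.one_lt_gcd_two_iff (k : ℕ) : 1 < Nat.gcd 2 k ↔ Even k := by
  rw [even_iff_two_dvd, ← Nat.prime_two.coprime_iff_not_dvd.not_left, Nat.coprime_iff_gcd_eq_one]
  have := Nat.gcd_pos_of_pos_left k two_pos
  omega

theorem Nat.one_lt_gcd_add_two_iff (m n : ℕ) :
    1 < Nat.gcd (m + 2) (n + 2) ↔
      m = n ∨ (m = 0 ∧ Even n) ∨ (n = 0 ∧ Even m) ∨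
        (0 < m ∧ 0 < n ∧ 1 < Nat.gcd (m + 2) (n + 2)) := by
  have h₂ (k : ℕ) : Even (k + 2) ↔ Even k := by simp [Nat.even_add]
  constructor
  · intro h
    rcases Nat.eq_zero_or_pos m with rfl | hm
    · exact Or.inr (Or.inl ⟨rfl, by rwa [← h₂, ← Nat.one_lt_gcd_two_iff]⟩)
    rcases Nat.eq_zero_or_pos n with rfl | hn
    · exact Or.inr (Or.inr (Or.inl ⟨rfl, by rwa [← h₂, ← Nat.one_lt_gcd_two_iff, Nat.gcd_comm]⟩))
    exact Or.inr (Or.inr (Or.inr ⟨hm, hn, h⟩))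
  · rintro (rfl | ⟨rfl, hn⟩ | ⟨rfl, hm⟩ | ⟨-, -, h⟩)
    · rw [Nat.gcd_self]; omega
    · rwa [zero_add, Nat.one_lt_gcd_two_iff, h₂]
    · rwa [zero_add, Nat.gcd_comm, Nat.one_lt_gcd_two_iff, h₂]
    · exact h

/-- Over an alphabet containing two distinct letters `a` and
`b`, there exist words `u, v` with `|u| = m`, `|v| = n` and
`u·ab·v = v·ab·u` iff `m = n`, or `m = 0` and `n` even, or `n = 0` and `m`
even, or `m, n > 0` and `gcd (m+2) (n+2) > 1`. -/
theorem lenAbs_xaby_eq_yabx {A : Type*} (a b : A) (hab : a ≠ b) (m n : ℕ) :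
    (∃ u v : List A,
        u.length = m ∧ v.length = n ∧
          u ++ [a, b] ++ v = v ++ [a, b] ++ u) ↔
      (m = n ∨ (m = 0 ∧ Even n) ∨ (n = 0 ∧ Even m) ∨
        (0 < m ∧ 0 < n ∧ 1 < Nat.gcd (m + 2) (n + 2))) := by
  rw [← Nat.one_lt_gcd_add_two_iff]
  constructor
  · rintro ⟨u, v, rfl, rfl, h⟩
    have hcomm : u ++ [a, b] ++ (v ++ [a, b]) = v ++ [a, b] ++ (u ++ [a, b]) := by
      simp only [← List.append_assoc, h]
    simpa using List.one_lt_gcd_length_of_append_comm hab (by simp) (by simp) hcomm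
  · intro h
    exact List.exists_append_append_comm_of_dvd a (List.cons_ne_nil a [b]) h
      (Nat.gcd_dvd_left _ _) (Nat.gcd_dvd_right _ _)
end

section
/- Let a and b be distinct letters of an alphabet A, and let d > 1 with d dividing m + 2 and d dividing n + 2, where m > 0 and n > 0. Then the words u = (a^{d−1}b)^{(m+2)/d − 1}·a^{d−2} and v = (a^{d−1}b)^{(n+2)/d − 1}·a^{d−2} satisfy |u| = m, |v| = n, and u·ab·v = v·ab·u. -/
/-! With `w = a^{d-1}b`, the word `u_k = w^{k-1}·a^{d-2}` satisfies `u_k·ab = w^k` as soon as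
`d ≥ 2`, hence `u_k·ab·u_l = u_{k+l}`, which is symmetric in `k` and `l`. -/

namespace List

variable {α : Type*}

theorem flatten_replicate_pred_append_append {w p q : List α} (hpq : p ++ q = w) {k : ℕ}
    (hk : 0 < k) : (replicate (k - 1) w).flatten ++ p ++ q = (replicate k w).flatten := by
  obtain ⟨k, rfl⟩ := Nat.exists_eq_add_of_lt hk
  rw [append_assoc, hpq, Nat.add_sub_cancel, replicate_succ', flatten_append, flatten_singleton]

theorem flatten_replicate_pred_append_append_flatten_replicate_pred_append {w p q : List α}
    (hpq : p ++ q = w) {k l : ℕ} (hk : 0 < k) (hl : 0 < l) :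
    (replicate (k - 1) w).flatten ++ p ++ q ++ ((replicate (l - 1) w).flatten ++ p) =
      (replicate (k + l - 1) w).flatten ++ p := by
  rw [flatten_replicate_pred_append_append hpq hk, ← append_assoc, ← flatten_append,
    ← replicate_add]
  congr 3
  omega

theorem replicate_sub_two_append_pair (a b : α) {d : ℕ} (hd : 1 < d) :
    replicate (d - 2) a ++ [a, b] = replicate (d - 1) a ++ [b] := by
  obtain ⟨d, rfl⟩ := Nat.exists_eq_add_of_lt hd
  rw [show [a, b] = [a] ++ [b] from rfl, ← append_assoc, ← replicate_succ']
  congr 2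
  omega

theorem length_flatten_replicate_pred_append_replicate_sub_two (a b : α) {d k : ℕ}
    (hd : 1 < d) (hk : 0 < k) :
    ((replicate (k - 1) (replicate (d - 1) a ++ [b])).flatten ++ replicate (d - 2) a).length + 2 =
      k * d := by
  obtain ⟨k, rfl⟩ := Nat.exists_eq_add_of_lt hk
  obtain ⟨d, rfl⟩ := Nat.exists_eq_add_of_lt hd
  simp only [length_append, length_flatten, map_replicate, sum_replicate, length_replicate,
    length_singleton, smul_eq_mul]
  grind

end List

theorem gcd_witness_xaby_eq_yabx_general {A : Type*} (a b : A)
    (d m n : ℕ) (hd : 1 < d)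
    (hdm : d ∣ m + 2) (hdn : d ∣ n + 2) :
    (((List.replicate ((m + 2) / d - 1) (List.replicate (d - 1) a ++ [b])).flatten
        ++ List.replicate (d - 2) a).length = m) ∧
    (((List.replicate ((n + 2) / d - 1) (List.replicate (d - 1) a ++ [b])).flatten
        ++ List.replicate (d - 2) a).length = n) ∧
    (((List.replicate ((m + 2) / d - 1) (List.replicate (d - 1) a ++ [b])).flatten
        ++ List.replicate (d - 2) a)
      ++ [a, b] ++
      ((List.replicate ((n + 2) / d - 1) (List.replicate (d - 1) a ++ [b])).flatten
        ++ List.replicate (d - 2) a)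
      =
      ((List.replicate ((n + 2) / d - 1) (List.replicate (d - 1) a ++ [b])).flatten
        ++ List.replicate (d - 2) a)
      ++ [a, b] ++
      ((List.replicate ((m + 2) / d - 1) (List.replicate (d - 1) a ++ [b])).flatten
        ++ List.replicate (d - 2) a)) := by
  have hkm : (m + 2) / d * d = m + 2 := Nat.div_mul_cancel hdm
  have hkn : (n + 2) / d * d = n + 2 := Nat.div_mul_cancel hdn
  have hk : 0 < (m + 2) / d := Nat.div_pos (Nat.le_of_dvd (by omega) hdm) (by omega)
  have hl : 0 < (n + 2) / d := Nat.div_pos (Nat.le_of_dvd (by omega) hdn) (by omega)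
  have hab := List.replicate_sub_two_append_pair a b hd
  refine ⟨?_, ?_, ?_⟩
  · have := List.length_flatten_replicate_pred_append_replicate_sub_two a b hd hk
    omega
  · have := List.length_flatten_replicate_pred_append_replicate_sub_two a b hd hl
    omega
  · rw [List.flatten_replicate_pred_append_append_flatten_replicate_pred_append hab hk hl,
      List.flatten_replicate_pred_append_append_flatten_replicate_pred_append hab hl hk, Nat.add_comm]

/-- For distinct letters `a, b`, if `d > 1` divides `m + 2`
and `n + 2` with `m, n > 0`, then the words
`u = (a^{d-1}b)^{(m+2)/d - 1}·a^{d-2}` and `v = (a^{d-1}b)^{(n+2)/d - 1}·a^{d-2}`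
satisfy `|u| = m`, `|v| = n` and `u·ab·v = v·ab·u`. -/
theorem gcd_witness_xaby_eq_yabx {A : Type*} (a b : A) (hab : a ≠ b)
    (d m n : ℕ) (hd : 1 < d) (hm : 0 < m) (hn : 0 < n)
    (hdm : d ∣ m + 2) (hdn : d ∣ n + 2) :
    (((List.replicate ((m + 2) / d - 1) (List.replicate (d - 1) a ++ [b])).flatten
        ++ List.replicate (d - 2) a).length = m) ∧
    (((List.replicate ((n + 2) / d - 1) (List.replicate (d - 1) a ++ [b])).flatten
        ++ List.replicate (d - 2) a).length = n) ∧
    (((List.replicate ((m + 2) / d - 1) (List.replicate (d - 1) a ++ [b])).flatten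
        ++ List.replicate (d - 2) a)
      ++ [a, b] ++
      ((List.replicate ((n + 2) / d - 1) (List.replicate (d - 1) a ++ [b])).flatten
        ++ List.replicate (d - 2) a)
      =
      ((List.replicate ((n + 2) / d - 1) (List.replicate (d - 1) a ++ [b])).flatten
        ++ List.replicate (d - 2) a)
      ++ [a, b] ++
      ((List.replicate ((m + 2) / d - 1) (List.replicate (d - 1) a ++ [b])).flatten
        ++ List.replicate (d - 2) a)) :=
  gcd_witness_xaby_eq_yabx_general a b d m n hd hdm hdn
end

section
/- Let a and b be distinct letters of an alphabet A, and let u, v ∈ A* satisfy u·ab·v = v·ab·u with |u| > |v| > 0. Then |u| ≠ |v| + 1, hence |u| ≥ |v| + 2; moreover, writing u = p·u' with |p| = |v| + 2, the suffix u' satisfies u'·ab·v = v·ab·u', and gcd(|u'| + 2, |v| + 2) = gcd(|u| + 2, |v| + 2). -/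
/-!
Both sides of `u·w·v = v·w·u` start with the common word, so when `|u| ≥ |v·w|` the word `v·w` is
a prefix of `u`; cancelling it leaves the same equation for the shorter suffix, and the lengths
`|u| + 2`, `|v| + 2` drop by one Euclidean subtraction step. For `w = ab` the borderline case
`|u| = |v| + 1` is impossible: comparing prefixes of length `|v| + 2` gives `u·a = v·ab`, so `a = b`.
-/

namespace List

variable {α : Type*}

theorem append_prefix_of_append_append_comm {u v w : List α} (h : u ++ w ++ v = v ++ w ++ u)
    (hlen : (v ++ w).length ≤ u.length) : v ++ w <+: u :=
  have hvw : v ++ w <+: u ++ w ++ v := h ▸ ⟨u, rfl⟩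
  have hu : u <+: u ++ w ++ v := ⟨w ++ v, by simp⟩
  prefix_of_prefix_length_le hvw hu hlen

theorem eq_append_of_append_append_comm {u v w p u' : List α} (h : u ++ w ++ v = v ++ w ++ u)
    (hu : u = p ++ u') (hp : p.length = (v ++ w).length) : p = v ++ w := by
  have hvw : v ++ w <+: u := append_prefix_of_append_append_comm h (by simp [hu, hp])
  have hp' : p <+: u := ⟨u', hu.symm⟩
  exact (prefix_of_prefix_length_le hp' hvw hp.le).eq_of_length hp

theorem append_append_comm_of_eq_append {u v w u' : List α} (h : u ++ w ++ v = v ++ w ++ u)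
    (hu : u = v ++ w ++ u') : u' ++ w ++ v = v ++ w ++ u' := by
  subst hu
  simp only [append_assoc] at h ⊢
  exact append_cancel_left (append_cancel_left h)

theorem length_ne_succ_of_append_pair_comm {a b : α} (hab : a ≠ b) {u v : List α}
    (h : u ++ [a, b] ++ v = v ++ [a, b] ++ u) : u.length ≠ v.length + 1 := by
  intro hlen
  have hua : u ++ [a] <+: u ++ [a, b] ++ v := ⟨b :: v, by simp⟩
  have hvab : v ++ [a, b] <+: u ++ [a, b] ++ v := h ▸ ⟨u, rfl⟩
  have hprefix : u ++ [a] = v ++ [a, b] :=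
    (prefix_of_prefix_length_le hua hvab (by simp [hlen])).eq_of_length (by simp [hlen])
  have hlast : u = v ++ [a] ∧ [a] = [b] :=
    append_inj (by simpa using hprefix) (by simp [hlen])
  exact hab (by simpa using hlast.2)

end List

theorem descent_xaby_eq_yabx_general {A : Type*} (a b : A) (hab : a ≠ b)
    (u v : List A) (heq : u ++ [a, b] ++ v = v ++ [a, b] ++ u)
    (h1 : v.length < u.length) :
    u.length ≠ v.length + 1 ∧ v.length + 2 ≤ u.length ∧
      ∀ p u' : List A, u = p ++ u' → p.length = v.length + 2 →
        (u' ++ [a, b] ++ v = v ++ [a, b] ++ u' ∧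
          Nat.gcd (u'.length + 2) (v.length + 2)
            = Nat.gcd (u.length + 2) (v.length + 2)) := by
  have hne := List.length_ne_succ_of_append_pair_comm hab heq
  refine ⟨hne, by omega, fun p u' hu hp => ?_⟩
  have hpe : p = v ++ [a, b] :=
    List.eq_append_of_append_append_comm heq hu (by simp [hp])
  subst hpe
  refine ⟨List.append_append_comm_of_eq_append heq hu, ?_⟩
  have hlen : u'.length + 2 = (u.length + 2) - (v.length + 2) := by
    simp only [hu, List.length_append, List.length_cons, List.length_nil]
    omega
  rw [hlen, Nat.gcd_sub_self_left (by omega)]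

/-- (Descent step.) For distinct letters `a, b`, if
`u·ab·v = v·ab·u` with `|u| > |v| > 0`, then `|u| ≠ |v| + 1`, hence
`|u| ≥ |v| + 2`; moreover, writing `u = p·u'` with `|p| = |v| + 2`, one has
`u'·ab·v = v·ab·u'` and `gcd (|u'|+2) (|v|+2) = gcd (|u|+2) (|v|+2)`. -/
theorem descent_xaby_eq_yabx {A : Type*} (a b : A) (hab : a ≠ b)
    (u v : List A) (heq : u ++ [a, b] ++ v = v ++ [a, b] ++ u)
    (h1 : v.length < u.length) (h2 : 0 < v.length) :
    u.length ≠ v.length + 1 ∧ v.length + 2 ≤ u.length ∧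
      ∀ p u' : List A, u = p ++ u' → p.length = v.length + 2 →
        (u' ++ [a, b] ++ v = v ++ [a, b] ++ u' ∧
          Nat.gcd (u'.length + 2) (v.length + 2)
            = Nat.gcd (u.length + 2) (v.length + 2)) :=
  descent_xaby_eq_yabx_general a b hab u v heq h1
end

section
/- Let E be a quadratic word equation and CA(E) its associated counter system. Every transition (E₁, v₁) → (E₂, v₂) of CA(E) satisfies |E₂| ≤ |E₁| and v₂ ⪯ v₁ (componentwise), and if v₂ = v₁ then |E₂| < |E₁|. Consequently, every path in CA(E) starting from a configuration (E₀, v₀) has length at most |E₀| + Σ_{x ∈ V} v₀(x); in particular, CA(E) terminates from every configuration. -/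
/-! On a quadratic equation no Nielsen step increases the number of occurrences of any variable:
the substituted variable `y` occurs at most once besides its leading occurrence, so `y ↦ z y`
creates at most one new `z` while the leading `z` is removed. Hence every reachable equation is
quadratic, and on it `y ↦ a y` and `y ↦ z y` do not lengthen the equation. Transitions of `CA(E)`
that leave the counters unchanged (erasing and `P1`) strictly shorten the equation, the others
strictly decrease a counter, so `|E| + Σ v` decreases at every transition. -/

namespace WordEq

variable {A V : Type*}

/-- The transition relation of the counter system `CA(E)` associated with a
word equation: configurations are pairs of an equation (a control state) and a
valuation of the counters (one counter per variable, standing for the length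
of that variable).  Each Nielsen step induces a transition with the
corresponding Presburger guard/update on the counters. -/
inductive CStep [DecidableEq V] :
    Equation A V × (V → ℕ) → Equation A V × (V → ℕ) → Prop
  | eraseL (x : V) (w₁ w₂ : Word A V) (v : V → ℕ) (hx : v x = 0) :
      CStep ((Sum.inr x :: w₁, w₂), v) ((substVar x [] w₁, substVar x [] w₂), v)
  | eraseR (w₁ : Word A V) (x : V) (w₂ : Word A V) (v : V → ℕ) (hx : v x = 0) :
      CStep ((w₁, Sum.inr x :: w₂), v) ((substVar x [] w₁, substVar x [] w₂), v)
  | p1 (α : A ⊕ V) (w₁ w₂ : Word A V) (v : V → ℕ) :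
      CStep ((α :: w₁, α :: w₂), v) ((w₁, w₂), v)
  | p2 (a : A) (y : V) (w₁ w₂ : Word A V) (v : V → ℕ) (hy : 0 < v y) :
      CStep ((Sum.inl a :: w₁, Sum.inr y :: w₂), v)
        ((substVar y [Sum.inl a, Sum.inr y] w₁,
          Sum.inr y :: substVar y [Sum.inl a, Sum.inr y] w₂),
          Function.update v y (v y - 1))
  | p3 (x : V) (a : A) (w₁ w₂ : Word A V) (v : V → ℕ) (hx : 0 < v x) :
      CStep ((Sum.inr x :: w₁, Sum.inl a :: w₂), v)
        ((Sum.inr x :: substVar x [Sum.inl a, Sum.inr x] w₁,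
          substVar x [Sum.inl a, Sum.inr x] w₂),
          Function.update v x (v x - 1))
  | p4L (x y : V) (hxy : x ≠ y) (w₁ w₂ : Word A V) (v : V → ℕ)
      (h₁ : 0 < v x) (h₂ : v x ≤ v y) :
      CStep ((Sum.inr x :: w₁, Sum.inr y :: w₂), v)
        ((substVar y [Sum.inr x, Sum.inr y] w₁,
          Sum.inr y :: substVar y [Sum.inr x, Sum.inr y] w₂),
          Function.update v y (v y - v x))
  | p4R (x y : V) (hxy : x ≠ y) (w₁ w₂ : Word A V) (v : V → ℕ)
      (h₁ : 0 < v y) (h₂ : v y ≤ v x) :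
      CStep ((Sum.inr x :: w₁, Sum.inr y :: w₂), v)
        ((Sum.inr x :: substVar x [Sum.inr y, Sum.inr x] w₁,
          substVar x [Sum.inr y, Sum.inr x] w₂),
          Function.update v x (v x - v y))

-- Core derives `BEq` for `Sum` structurally, and `List.count` on words uses that instance.
instance instLawfulBEqSum {α β : Type*} [BEq α] [BEq β] [LawfulBEq α] [LawfulBEq β] :
    LawfulBEq (α ⊕ β) where
  eq_of_beq {a b} h := by
    cases a <;> cases b
    · exact congrArg Sum.inl (eq_of_beq h)
    · exact Bool.noConfusion h
    · exact Bool.noConfusion h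
    · exact congrArg Sum.inr (eq_of_beq h)
  rfl {a} := by
    cases a
    · exact ReflBEq.rfl (α := α)
    · exact ReflBEq.rfl (α := β)

theorem add_le_of_forall_succ_lt {f : ℕ → ℕ} {n : ℕ} (h : ∀ i < n, f (i + 1) < f i) :
    n + f n ≤ f 0 := by
  induction n with
  | zero => simp
  | succ k ih =>
    have := ih fun i hi => h i (by omega)
    have := h k (by omega)
    omega

theorem CStep.nielsen [DecidableEq V] {c₁ c₂ : Equation A V × (V → ℕ)} (h : CStep c₁ c₂) :
    Nielsen c₁.1 c₂.1 := by
  cases h with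
  | eraseL x w₁ w₂ => exact .eraseL x w₁ w₂
  | eraseR w₁ x w₂ => exact .eraseR w₁ x w₂
  | p1 α w₁ w₂ => exact .p1 α w₁ w₂
  | p2 a y w₁ w₂ => exact .p2 a y w₁ w₂
  | p3 x a w₁ w₂ => exact .p3 x a w₁ w₂
  | p4L x y hxy w₁ w₂ => exact .p4L x y hxy w₁ w₂
  | p4R x y hxy w₁ w₂ => exact .p4R x y hxy w₁ w₂

section

variable [DecidableEq A] [DecidableEq V]

theorem length_substVar (x : V) (r w : Word A V) :
    (substVar x r w).length + w.count (.inr x) = w.length + w.count (.inr x) * r.length := by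
  induction w with
  | nil => simp [substVar]
  | cons s w ih =>
    rcases s with a | y <;>
      simp only [substVar, List.flatMap_cons, List.length_append, List.count_cons,
        List.length_cons, beq_iff_eq, Sum.inr.injEq, reduceCtorEq] at ih ⊢ <;>
      grind

theorem length_substVar_nil (x : V) (w : Word A V) :
    (substVar x [] w).length + w.count (.inr x) = w.length := by
  simpa using length_substVar x [] w

theorem length_substVar_pair (x : V) (s t : A ⊕ V) (w : Word A V) :
    (substVar x [s, t] w).length = w.length + w.count (.inr x) := by
  have := length_substVar x [s, t] w
  simp only [List.length_cons, List.length_nil] at this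
  omega

theorem count_substVar (x : V) (r w : Word A V) (s : A ⊕ V) :
    (substVar x r w).count s =
      (if s = .inr x then 0 else w.count s) + w.count (.inr x) * r.count s := by
  induction w with
  | nil => simp [substVar]
  | cons t w ih =>
    rcases t with a | y <;>
      simp only [substVar, List.flatMap_cons, List.count_append, List.count_cons,
        beq_iff_eq, Sum.inr.injEq, reduceCtorEq] at ih ⊢ <;>
      grind

theorem Nielsen.varCount_le {E₁ E₂ : Equation A V} (h : Nielsen E₁ E₂) (hq : Quadratic E₁)
    (z : V) : varCount E₂ z ≤ varCount E₁ z := by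
  cases h with
  -- `y` occurs at most once in `w₁ ++ w₂`, so `y ↦ x y` adds at most the one `x` it removed.
  | p4L x y | p4R y x =>
    have hy := hq y
    simp only [varCount, List.cons_append, List.count_append, List.count_cons, count_substVar,
      List.count_nil, beq_iff_eq, Sum.inr.injEq] at hy ⊢
    grind
  | _ =>
    simp only [varCount, List.cons_append, List.count_append, List.count_cons, count_substVar,
      List.count_nil, beq_iff_eq, Sum.inr.injEq, reduceCtorEq]
    grind

theorem Nielsen.quadratic {E₁ E₂ : Equation A V} (h : Nielsen E₁ E₂) (hq : Quadratic E₁) :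
    Quadratic E₂ :=
  fun z => (h.varCount_le hq z).trans (hq z)

theorem Quadratic.of_reflTransGen_nielsen {E₁ E₂ : Equation A V} (hq : Quadratic E₁)
    (h : Relation.ReflTransGen Nielsen E₁ E₂) : Quadratic E₂ := by
  induction h with
  | refl => exact hq
  | tail _ hstep ih => exact hstep.quadratic ih

theorem Nielsen.eqLen_le {E₁ E₂ : Equation A V} (h : Nielsen E₁ E₂) (hq : Quadratic E₁) :
    eqLen E₂ ≤ eqLen E₁ := by
  cases h with
  | eraseL x w₁ w₂ | eraseR w₁ x w₂ =>
    have h₁ := length_substVar_nil x w₁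
    have h₂ := length_substVar_nil x w₂
    simp only [eqLen, List.length_cons]
    omega
  | p1 => simp only [eqLen, List.length_cons]; omega
  | p2 _ x | p3 x | p4L _ x | p4R x =>
    have hx := hq x
    simp only [varCount, eqLen, List.cons_append, List.count_append, List.count_cons,
      List.length_cons, length_substVar_pair, beq_iff_eq, Sum.inr.injEq, reduceCtorEq] at hx ⊢
    grind

theorem CStep.snd_lt_or_eqLen_lt {c₁ c₂ : Equation A V × (V → ℕ)} (h : CStep c₁ c₂) :
    c₂.2 < c₁.2 ∨ c₂.2 = c₁.2 ∧ eqLen c₂.1 < eqLen c₁.1 := by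
  cases h with
  | eraseL x w₁ w₂ | eraseR w₁ x w₂ =>
    refine .inr ⟨rfl, ?_⟩
    have h₁ := length_substVar_nil x w₁
    have h₂ := length_substVar_nil x w₂
    simp only [eqLen, List.length_cons]
    omega
  | p1 => exact .inr ⟨rfl, by simp only [eqLen, List.length_cons]; omega⟩
  | p2 _ _ _ _ _ hv | p3 _ _ _ _ _ hv | p4L _ _ _ _ _ _ hv | p4R _ _ _ _ _ _ hv =>
    left
    rw [update_lt_self_iff]
    omega

theorem CStep.snd_le {c₁ c₂ : Equation A V × (V → ℕ)} (h : CStep c₁ c₂) : c₂.2 ≤ c₁.2 :=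
  h.snd_lt_or_eqLen_lt.elim le_of_lt fun h => h.1.le

theorem CStep.eqLen_lt_of_snd_eq {c₁ c₂ : Equation A V × (V → ℕ)} (h : CStep c₁ c₂)
    (hv : c₂.2 = c₁.2) : eqLen c₂.1 < eqLen c₁.1 :=
  h.snd_lt_or_eqLen_lt.elim (fun h => absurd hv h.ne) And.right

def potential [Fintype V] (c : Equation A V × (V → ℕ)) : ℕ := eqLen c.1 + ∑ x, c.2 x

theorem CStep.potential_lt [Fintype V] {c₁ c₂ : Equation A V × (V → ℕ)} (h : CStep c₁ c₂)
    (hq : Quadratic c₁.1) : potential c₂ < potential c₁ := by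
  unfold potential
  rcases h.snd_lt_or_eqLen_lt with hv | ⟨hv, hlen⟩
  · obtain ⟨hle, x, hx⟩ := Pi.lt_def.1 hv
    have := Finset.sum_lt_sum (fun i _ => hle i) ⟨x, Finset.mem_univ x, hx⟩
    have := h.nielsen.eqLen_le hq
    omega
  · rw [hv]
    omega

end

theorem counterSystem_terminates_general
    [Fintype V] [DecidableEq A] [DecidableEq V]
    (E : Equation A V) (hq : Quadratic E) :
    (∀ (E₁ E₂ : Equation A V) (v₁ v₂ : V → ℕ),
        Relation.ReflTransGen Nielsen E E₁ →
        CStep (E₁, v₁) (E₂, v₂) →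
          eqLen E₂ ≤ eqLen E₁ ∧ (∀ x : V, v₂ x ≤ v₁ x) ∧
            (v₂ = v₁ → eqLen E₂ < eqLen E₁)) ∧
    (∀ (E₀ : Equation A V) (v₀ : V → ℕ),
        Relation.ReflTransGen Nielsen E E₀ →
        ∀ (n : ℕ) (c : ℕ → Equation A V × (V → ℕ)),
          c 0 = (E₀, v₀) → (∀ i < n, CStep (c i) (c (i + 1))) →
            n ≤ eqLen E₀ + ∑ x : V, v₀ x) := by
  refine ⟨fun E₁ E₂ v₁ v₂ hE₁ h =>
    ⟨h.nielsen.eqLen_le (hq.of_reflTransGen_nielsen hE₁), h.snd_le, h.eqLen_lt_of_snd_eq⟩, ?_⟩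
  intro E₀ v₀ hE₀ n c hc₀ hc
  have hquad : ∀ i ≤ n, Quadratic (c i).1 := by
    intro i
    induction i with
    | zero => intro _; rw [hc₀]; exact hq.of_reflTransGen_nielsen hE₀
    | succ i ih => intro hi; exact (hc i hi).nielsen.quadratic (ih (by omega))
  have := add_le_of_forall_succ_lt (f := fun i => potential (c i))
    fun i hi => (hc i hi).potential_lt (hquad i hi.le)
  simp only [hc₀, potential] at this
  omega

/-- In the counter system `CA(E)` of a quadratic word
equation `E`, every transition `(E₁, v₁) → (E₂, v₂)` (from a control state
reachable from `E`) satisfies `|E₂| ≤ |E₁|`, `v₂ ⪯ v₁`, and if `v₂ = v₁` then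
`|E₂| < |E₁|`.  Consequently, every path starting in a configuration
`(E₀, v₀)` has length at most `|E₀| + Σ_x v₀(x)`; in particular `CA(E)`
terminates from every configuration. -/
theorem counterSystem_terminates
    [Finite A] [Fintype V] [DecidableEq A] [DecidableEq V]
    (E : Equation A V) (hq : Quadratic E) :
    (∀ (E₁ E₂ : Equation A V) (v₁ v₂ : V → ℕ),
        Relation.ReflTransGen Nielsen E E₁ →
        CStep (E₁, v₁) (E₂, v₂) →
          eqLen E₂ ≤ eqLen E₁ ∧ (∀ x : V, v₂ x ≤ v₁ x) ∧
            (v₂ = v₁ → eqLen E₂ < eqLen E₁)) ∧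
    (∀ (E₀ : Equation A V) (v₀ : V → ℕ),
        Relation.ReflTransGen Nielsen E E₀ →
        ∀ (n : ℕ) (c : ℕ → Equation A V × (V → ℕ)),
          c 0 = (E₀, v₀) → (∀ i < n, CStep (c i) (c (i + 1))) →
            n ≤ eqLen E₀ + ∑ x : V, v₀ x) :=
  counterSystem_terminates_general E hq

end WordEq
end

section
/- Let A = {a, b, #} with a, b, # pairwise distinct letters, and let L = {#·w : w ∈ {a,b}*} ⊆ A*. For all natural numbers m, n, k: there exist words x ∈ L, y ∈ L, and z ∈ A* with |x| = m, |y| = n, |z| = k and x·z = z·y, if and only if m = n, m > 0, and m divides k. -/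
/-!
If `x ++ z = z ++ y` where `x = # :: t` and `#` does not occur in `t`, then `z` is either empty
or starts with `x`: the copy of `#` at position `|z|` of the right-hand side cannot fall strictly
inside `x`. Peeling off copies of `x` shows `|x| ∣ |z|`. Conversely `x = y = # a^(m-1)` and
`z = x^q` solve the equation.
-/

namespace List

variable {α : Type*}

theorem append_flatten_replicate_comm (w : List α) (q : ℕ) :
    w ++ (replicate q w).flatten = (replicate q w).flatten ++ w := by
  rw [← flatten_cons, ← replicate_succ, replicate_succ', flatten_append, flatten_singleton]

theorem cons_prefix_of_cons_append_eq_append_cons {c : α} {t s z : List α} (hc : c ∉ t)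
    (hz : z ≠ []) (h : c :: t ++ z = z ++ c :: s) : c :: t <+: z := by
  rcases prefix_or_prefix_of_prefix (prefix_append (c :: t) z)
      (h ▸ prefix_append z (c :: s)) with hp | ⟨u, hu⟩
  · exact hp
  have huz : u ++ z = c :: s := by
    rwa [← hu, append_assoc, append_cancel_left_eq] at h
  cases u with
  | nil => simp_all
  | cons d u' =>
    obtain rfl : d = c := (cons_eq_cons.mp huz).1
    obtain ⟨e, z', rfl⟩ := exists_cons_of_ne_nil hz
    exact (hc (by rw [← (cons_eq_cons.mp hu).2]; simp)).elim

theorem length_cons_dvd_of_cons_append_eq_append_cons {c : α} {t s z : List α} (hc : c ∉ t)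
    (h : c :: t ++ z = z ++ c :: s) : (t.length + 1) ∣ z.length := by
  obtain rfl | hz := eq_or_ne z []
  · simp
  obtain ⟨z', rfl⟩ := cons_prefix_of_cons_append_eq_append_cons hc hz h
  have := length_cons_dvd_of_cons_append_eq_append_cons hc
    (append_cancel_left (h.trans (append_assoc _ _ _)))
  rw [length_append]
  exact Nat.dvd_add_self_left.mpr this
termination_by z.length
decreasing_by subst_vars; simp

end List

theorem lenAbs_xz_eq_zy_with_regular_constraints_general
    {A : Type*} (a b hash : A) (hah : a ≠ hash) (hbh : b ≠ hash)
    (m n k : ℕ) :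
    (∃ x y z : List A,
        (∃ t : List A, (∀ c ∈ t, c = a ∨ c = b) ∧ x = hash :: t) ∧
        (∃ t : List A, (∀ c ∈ t, c = a ∨ c = b) ∧ y = hash :: t) ∧
        x.length = m ∧ y.length = n ∧ z.length = k ∧
        x ++ z = z ++ y) ↔
      (m = n ∧ 0 < m ∧ m ∣ k) := by
  constructor
  · rintro ⟨x, y, z, ⟨t, ht, rfl⟩, ⟨s, -, rfl⟩, rfl, rfl, rfl, h⟩
    have hlen := congrArg List.length h
    simp only [List.length_append, List.length_cons] at hlen ⊢
    have hash_notMem : hash ∉ t := fun hmem => (ht hash hmem).elim (hah ·.symm) (hbh ·.symm)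
    exact ⟨by omega, by omega, List.length_cons_dvd_of_cons_append_eq_append_cons hash_notMem h⟩
  · rintro ⟨rfl, hm, q, rfl⟩
    obtain ⟨m, rfl⟩ := Nat.exists_eq_add_of_lt hm
    have hw : ∀ c ∈ List.replicate m a, c = a ∨ c = b := fun c hc =>
      Or.inl (List.eq_of_mem_replicate hc)
    refine ⟨_, _, (List.replicate q (hash :: List.replicate m a)).flatten, ⟨_, hw, rfl⟩,
      ⟨_, hw, rfl⟩, by simp, by simp, ?_, List.append_flatten_replicate_comm _ q⟩
    simp [Nat.mul_comm]

/-- Let `a, b, #` be pairwise distinct letters and let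
`L = #·{a,b}*`. For all naturals `m, n, k`: there are words `x ∈ L`, `y ∈ L`
and `z` with `|x| = m`, `|y| = n`, `|z| = k` and `x·z = z·y` iff `m = n`,
`m > 0` and `m` divides `k`. -/
theorem lenAbs_xz_eq_zy_with_regular_constraints
    {A : Type*} (a b hash : A) (hab : a ≠ b) (hah : a ≠ hash) (hbh : b ≠ hash)
    (m n k : ℕ) :
    (∃ x y z : List A,
        (∃ t : List A, (∀ c ∈ t, c = a ∨ c = b) ∧ x = hash :: t) ∧
        (∃ t : List A, (∀ c ∈ t, c = a ∨ c = b) ∧ y = hash :: t) ∧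
        x.length = m ∧ y.length = n ∧ z.length = k ∧
        x ++ z = z ++ y) ↔
      (m = n ∧ 0 < m ∧ m ∣ k) :=
  lenAbs_xz_eq_zy_with_regular_constraints_general a b hash hah hbh m n k
end

section
/- The set {(m, n, k) ∈ ℕ³ : m = n, m > 0, and m divides k} is not semilinear. Consequently, there exists a regular-oriented word equation with regular constraints whose length abstraction is not Presburger-definable. -/
namespace WordEq

variable {A V : Type*}

/-- A word equation is regular if each variable occurs at most once on each
side. -/
def Regular [DecidableEq A] [DecidableEq V] (E : Equation A V) : Prop :=
  ∀ x : V, E.1.count (Sum.inr x) ≤ 1 ∧ E.2.count (Sum.inr x) ≤ 1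

/-- On the word `w`, the variables occur in `lt`-increasing order. -/
def SideOrdered (lt : V → V → Prop) (w : Word A V) : Prop :=
  ∀ (w₁ w₂ w₃ : Word A V) (α β : V),
    w = w₁ ++ Sum.inr α :: w₂ ++ Sum.inr β :: w₃ → lt α β

/-- A word equation is oriented if there is a strict total order on the
variables such that on each side the variables occur in increasing order. -/
def Oriented (E : Equation A V) : Prop :=
  ∃ lt : V → V → Prop,
    IsStrictTotalOrder V lt ∧ SideOrdered lt E.1 ∧ SideOrdered lt E.2

/-- A regular-oriented word equation. -/
def RegularOriented [DecidableEq A] [DecidableEq V] (E : Equation A V) : Prop :=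
  Regular E ∧ Oriented E

/-- The length abstraction of a word equation under regular constraints
`C : V → Language A`: the set of tuples of lengths of the variables under the
solutions of `E` satisfying the constraints. -/
def lenAbsC (E : Equation A V) (C : V → Language A) : Set (V → ℕ) :=
  {v | ∃ σ : V → List A,
    IsSolution σ E ∧ (∀ x : V, σ x ∈ C x) ∧ ∀ x : V, (σ x).length = v x}

end WordEq

section Semilinear

variable {M : Type*} [AddCommMonoid M]

def linearSet {m : ℕ} (b : M) (p : Fin m → M) : Set M :=
  {v | ∃ lam : Fin m → ℕ, v = b + ∑ i, lam i • p i}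

theorem isLinearSet'_iff {S : Set M} :
    IsLinearSet' S ↔ ∃ (b : M) (m : ℕ) (p : Fin m → M), S = linearSet b p :=
  Iff.rfl

variable {m : ℕ} {b v : M} {p : Fin m → M}

theorem add_nsmul_mem_linearSet (hv : v ∈ linearSet b p) (j : Fin m) (N : ℕ) :
    v + N • p j ∈ linearSet b p := by
  obtain ⟨lam, rfl⟩ := hv
  refine ⟨lam + Pi.single j N, ?_⟩
  simp [add_smul, Finset.sum_add_distrib, Pi.single_apply, add_assoc]

theorem map_eq_of_mem_linearSet {N : Type*} [AddCommMonoid N] (f : M →+ N)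
    (hp : ∀ i, f (p i) = 0) (hv : v ∈ linearSet b p) : f v = f b := by
  obtain ⟨lam, rfl⟩ := hv
  simp [hp]

end Semilinear

theorem mul_eq_mul_of_forall_add_mul_dvd {m q k r : ℕ} (hq : 0 < q)
    (h : ∀ N : ℕ, m + N * q ∣ k + N * r) : q * k = r * m := by
  -- `m + N q` divides the constant `q k - r m` for every `N`, so that constant is `0`.
  have hdvd : ∀ N : ℕ, (m + N * q : ℤ) ∣ q * k - r * m := fun N => by
    have hN : (m + N * q : ℤ) ∣ k + N * r := by exact_mod_cast h N
    have : (q * k - r * m : ℤ) = q * (k + N * r) - r * (m + N * q) := by ring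
    rw [this]
    exact dvd_sub (hN.mul_left _) (dvd_mul_left _ _)
  set c : ℤ := q * k - r * m
  have hc : c = 0 := by
    refine Int.eq_zero_of_dvd_of_natAbs_lt_natAbs (hdvd (c.natAbs + 1)) ?_
    rw [show (m + ((c.natAbs + 1 : ℕ) : ℤ) * q) = ((m + (c.natAbs + 1) * q : ℕ) : ℤ) by
      push_cast; rfl, Int.natAbs_natCast]
    linarith [Nat.le_mul_of_pos_right (c.natAbs + 1) hq]
  omega

section Squares

variable {M : Type*} [AddCommMonoid M] (x z : M →+ ℕ)

theorem IsLinearSet'.subsingleton_image_sq_of_dvd {T : Set M} (hT : IsLinearSet' T)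
    (hdvd : ∀ v ∈ T, 0 < x v ∧ x v ∣ z v) :
    (x '' {v ∈ T | z v = x v * x v}).Subsingleton := by
  obtain ⟨b, m, p, rfl⟩ := isLinearSet'_iff.1 hT
  by_cases hp : ∀ i, x (p i) = 0
  · rintro _ ⟨v, ⟨hv, -⟩, rfl⟩ _ ⟨w, ⟨hw, -⟩, rfl⟩
    rw [map_eq_of_mem_linearSet x hp hv, map_eq_of_mem_linearSet x hp hw]
  obtain ⟨j, hj⟩ := not_forall.1 hp
  have hslope : ∀ v ∈ linearSet b p, z v = x v * x v → x (p j) * x v = z (p j) := by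
    intro v hv hsq
    have hpump : ∀ N : ℕ, x v + N * x (p j) ∣ z v + N * z (p j) := fun N => by
      simpa using (hdvd _ (add_nsmul_mem_linearSet hv j N)).2
    have := mul_eq_mul_of_forall_add_mul_dvd (Nat.pos_of_ne_zero hj) hpump
    rw [hsq, ← mul_assoc] at this
    exact Nat.eq_of_mul_eq_mul_right (hdvd v hv).1 this
  rintro _ ⟨v, ⟨hv, hv_sq⟩, rfl⟩ _ ⟨w, ⟨hw, hw_sq⟩, rfl⟩
  exact Nat.eq_of_mul_eq_mul_left (Nat.pos_of_ne_zero hj)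
    ((hslope v hv hv_sq).trans (hslope w hw hw_sq).symm)

theorem IsSemilinearSet'.finite_image_sq_of_dvd {S : Set M} (hS : IsSemilinearSet' S)
    (hdvd : ∀ v ∈ S, 0 < x v ∧ x v ∣ z v) :
    (x '' {v ∈ S | z v = x v * x v}).Finite := by
  obtain ⟨n, T, hT, rfl⟩ := hS
  refine (Set.finite_iUnion fun i => ((hT i).subsingleton_image_sq_of_dvd x z
    fun v hv => hdvd v (Set.mem_iUnion_of_mem i hv)).finite).subset ?_
  rintro _ ⟨v, ⟨hv, hv_sq⟩, rfl⟩
  obtain ⟨i, hi⟩ := Set.mem_iUnion.1 hv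
  exact Set.mem_iUnion.2 ⟨i, v, ⟨hi, hv_sq⟩, rfl⟩

end Squares

theorem not_isSemilinearSet'_setOf_dvd {M : Type*} [AddCommMonoid M] (x y z : M →+ ℕ)
    (hsq : ∀ n : ℕ, ∃ v, x v = n ∧ y v = n ∧ z v = n * n) :
    ¬ IsSemilinearSet' {v | x v = y v ∧ 0 < x v ∧ x v ∣ z v} := by
  intro hS
  refine Set.Ioi_infinite 0 ((hS.finite_image_sq_of_dvd x z fun v hv => hv.2).subset ?_)
  intro n hn
  obtain ⟨v, hx, hy, hz⟩ := hsq n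
  refine ⟨v, ⟨⟨hx.trans hy.symm, hx ▸ hn, ?_⟩, by rw [hz, hx]⟩, hx⟩
  rw [hz, hx]
  exact dvd_mul_right n n

section Words

variable {α : Type*}

theorem length_dvd_of_cons_append_eq_append_cons {c : α} {u v : List α} (hc : c ∉ u) :
    ∀ {z : List α}, c :: u ++ z = z ++ c :: v → (c :: u).length ∣ z.length
  | z, h => by
    rcases List.append_eq_append_iff.1 h with ⟨z', hz, hz'⟩ | ⟨s, hx, hy⟩
    · have hlt : z'.length < z.length := by simp [hz]
      have := length_dvd_of_cons_append_eq_append_cons hc (hz.symm.trans hz')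
      rw [hz, List.length_append]
      exact dvd_add dvd_rfl this
    · rcases z with _ | ⟨d, z⟩
      · exact dvd_zero _
      rcases s with _ | ⟨e, s⟩
      · simp [hx]
      obtain ⟨rfl, -⟩ := List.cons.inj hy
      simp only [List.cons_append, List.cons.injEq] at hx
      exact absurd (hx.2 ▸ List.mem_append_right z List.mem_cons_self) hc
termination_by z => z.length

theorem append_flatten_replicate_comm (k : ℕ) (w : List α) :
    w ++ (List.replicate k w).flatten = (List.replicate k w).flatten ++ w := by
  rw [← List.flatten_cons, ← List.replicate_succ, List.replicate_succ', List.flatten_append]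
  simp

end Words

namespace Language

variable {α : Type*}

def wordsOver (s : Set α) : Language α := {w | ∀ d ∈ w, d ∈ s}

theorem mem_wordsOver {s : Set α} {w : List α} : w ∈ wordsOver s ↔ ∀ d ∈ w, d ∈ s :=
  Iff.rfl

theorem isRegular_wordsOver (s : Set α) : (wordsOver s).IsRegular := by
  refine .of_finite_range_leftQuotient ((Set.toFinite {wordsOver s, 0}).subset ?_)
  rintro _ ⟨w, rfl⟩
  by_cases hw : w ∈ wordsOver s
  · refine Or.inl (Language.ext fun y => ?_)
    rw [mem_leftQuotient, mem_wordsOver, mem_wordsOver, List.forall_mem_append]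
    exact and_iff_right hw
  · refine Or.inr (Language.ext fun y => iff_of_false ?_ (notMem_zero y))
    rw [mem_leftQuotient, mem_wordsOver, List.forall_mem_append]
    exact fun h => hw h.1

theorem isRegular_top : (⊤ : Language α).IsRegular :=
  .of_finite_range_leftQuotient ((Set.finite_singleton ⊤).subset (by
    rintro _ ⟨w, rfl⟩
    exact Set.eq_univ_of_forall fun _ => trivial))

theorem IsRegular.image_cons {L : Language α} (hL : L.IsRegular) (c : α) :
    IsRegular (List.cons c '' L) := by
  refine .of_finite_range_leftQuotient
    (((hL.finite_range_leftQuotient.insert 0).insert (List.cons c '' L)).subset ?_)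
  rintro _ ⟨_ | ⟨d, w⟩, rfl⟩
  · exact Or.inl rfl
  by_cases hd : d = c
  · subst hd
    refine Or.inr (Or.inr ⟨w, Language.ext fun y => ?_⟩)
    exact (List.cons_injective.mem_set_image (a := w ++ y) (s := L)).symm
  · refine Or.inr (Or.inl (Language.ext fun y => iff_of_false ?_ (notMem_zero y)))
    rintro ⟨u, -, hu⟩
    exact hd (List.cons.inj hu).1.symm

end Language

namespace WordEq

variable {A V : Type*}

theorem sideOrdered_pair {lt : V → V → Prop} {i j : V} (h : lt i j) :
    SideOrdered lt ([Sum.inr i, Sum.inr j] : Word A V) := by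
  intro w₁ w₂ w₃ α β hw
  rcases w₁ with _ | ⟨_, _ | ⟨_, _⟩⟩ <;> rcases w₂ with _ | ⟨_, _⟩ <;> simp_all

/-- The conjugacy equation `x z = z y`, with `x, z, y` numbered `0, 1, 2` so that both sides are
ordered by `<`. -/
def conjugacyEq : Equation A (Fin 3) :=
  ([Sum.inr 0, Sum.inr 1], [Sum.inr 1, Sum.inr 2])

theorem regularOriented_conjugacyEq [DecidableEq A] :
    RegularOriented (conjugacyEq : Equation A (Fin 3)) :=
  -- `Sum`'s `BEq` instance is not `LawfulBEq`, so the counts are left to evaluation.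
  ⟨fun x => by fin_cases x <;> exact ⟨Nat.le_of_ble_eq_true rfl, Nat.le_of_ble_eq_true rfl⟩,
    (· < ·), inferInstance, sideOrdered_pair (by decide), sideOrdered_pair (by decide)⟩

theorem isSolution_conjugacyEq {σ : Fin 3 → List A} :
    IsSolution σ conjugacyEq ↔ σ 0 ++ σ 1 = σ 1 ++ σ 2 := by
  simp [IsSolution, applySub, conjugacyEq]

theorem lenAbsC_conjugacyEq (c : A) {s : Set A} (hc : c ∉ s) (hs : s.Nonempty) :
    lenAbsC conjugacyEq
        ![List.cons c '' Language.wordsOver s, ⊤, List.cons c '' Language.wordsOver s] =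
      {v | v 0 = v 2 ∧ 0 < v 0 ∧ v 0 ∣ v 1} := by
  ext v
  constructor
  · rintro ⟨σ, hsol, hC, hlen⟩
    obtain ⟨u, hu, hσ₀⟩ := hC 0
    obtain ⟨u', -, hσ₂⟩ := hC 2
    rw [isSolution_conjugacyEq, ← hσ₀, ← hσ₂] at hsol
    have hlen_eq := congrArg List.length hsol
    simp only [List.length_append] at hlen_eq
    rw [Set.mem_ofPred_eq, ← hlen 0, ← hlen 1, ← hlen 2, ← hσ₀, ← hσ₂]
    refine ⟨by omega, by simp, ?_⟩
    exact length_dvd_of_cons_append_eq_append_cons (fun h => hc (hu c h)) hsol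
  · rintro ⟨h02, hpos, k, hk⟩
    obtain ⟨d, hd⟩ := hs
    set w := c :: List.replicate (v 0 - 1) d
    have hw : w ∈ List.cons c '' Language.wordsOver s :=
      ⟨_, fun e he => List.eq_of_mem_replicate he ▸ hd, rfl⟩
    have hw_len : w.length = v 0 := by simp [w]; omega
    refine ⟨![w, (List.replicate k w).flatten, w],
      isSolution_conjugacyEq.2 (append_flatten_replicate_comm k w), ?_, ?_⟩
    · intro i
      fin_cases i
      exacts [hw, trivial, hw]
    · intro i
      fin_cases i <;> simp [hw_len, hk, h02, mul_comm]

theorem conjugacy_lenAbs_not_semilinear_general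
    {A : Type*} [DecidableEq A] (a b hash : A)
    (hah : a ≠ hash) (hbh : b ≠ hash) :
    ¬ IsSemilinearSet' {t : ℕ × ℕ × ℕ | t.1 = t.2.1 ∧ 0 < t.1 ∧ t.1 ∣ t.2.2} ∧
    ∃ (E : Equation A (Fin 3)) (C : Fin 3 → Language A),
      RegularOriented E ∧ (∀ i, (C i).IsRegular) ∧
        ¬ IsSemilinearSet' (lenAbsC E C) := by
  set L : Language A := List.cons hash '' Language.wordsOver {a, b}
  have hL : L.IsRegular := (Language.isRegular_wordsOver _).image_cons hash
  have hhash : hash ∉ ({a, b} : Set A) := by simp [hah.symm, hbh.symm]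
  refine ⟨not_isSemilinearSet'_setOf_dvd (AddMonoidHom.fst ℕ (ℕ × ℕ))
      ((AddMonoidHom.fst ℕ ℕ).comp (AddMonoidHom.snd ℕ (ℕ × ℕ)))
      ((AddMonoidHom.snd ℕ ℕ).comp (AddMonoidHom.snd ℕ (ℕ × ℕ)))
      fun n => ⟨(n, n, n * n), rfl, rfl, rfl⟩,
    conjugacyEq, ![L, ⊤, L], regularOriented_conjugacyEq, ?_, ?_⟩
  · intro i
    fin_cases i
    exacts [hL, Language.isRegular_top, hL]
  · rw [lenAbsC_conjugacyEq hash hhash ⟨a, by simp⟩]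
    exact not_isSemilinearSet'_setOf_dvd (Pi.evalAddMonoidHom _ 0) (Pi.evalAddMonoidHom _ 2)
      (Pi.evalAddMonoidHom _ 1) fun n => ⟨![n, n * n, n], rfl, rfl, rfl⟩

/-- The set `{(m, n, k) : m = n, m > 0, m ∣ k}` is not
semilinear (hence not Presburger-definable).  Consequently, over the alphabet
`{a, b, #}` there is a regular-oriented word equation with regular constraints
(namely `x·z = z·y` with `x, y ∈ #(a+b)*`) whose length abstraction is not
Presburger-definable. -/
theorem conjugacy_lenAbs_not_semilinear
    {A : Type*} [DecidableEq A] (a b hash : A)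
    (hab : a ≠ b) (hah : a ≠ hash) (hbh : b ≠ hash) :
    ¬ IsSemilinearSet' {t : ℕ × ℕ × ℕ | t.1 = t.2.1 ∧ 0 < t.1 ∧ t.1 ∣ t.2.2} ∧
    ∃ (E : Equation A (Fin 3)) (C : Fin 3 → Language A),
      RegularOriented E ∧ (∀ i, (C i).IsRegular) ∧
        ¬ IsSemilinearSet' (lenAbsC E C) :=
  conjugacy_lenAbs_not_semilinear_general a b hash hah hbh

end WordEq
end
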